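/- arXiv:2207.10908 — 4 statements merged into one kernel-verified Lean document; each statement's English description precedes it below -/
import Mathlib

section
/- An admissible curve on a junction decomposes its velocity along the edges: if y ∈ W^{1,2}([0,T];𝒢) is an admissible curve on the junction 𝒢 = ⋃_{i=1}^N ℝ⁺ e_i, then for almost every s ∈ [0,T], ẏ(s) = Σ_{i=1}^N 1_{\{y(s) ∈ J_i \setminus \{O\}\}} (ẏ(s)·e_i) e_i; in particular, for a.e. s with y(s) ∈ J_i \ {O}, the velocity ẏ(s) is a scalar multiple of e_i. -/
/-!
At almost every time `s` the curve has derivative `α s` (Lebesgue differentiation), and `s` is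
an accumulation point of the zero set of `y` whenever `y s = 0` (a set of reals has only
countably many isolated points). If `y s` lies on the edge `Jᵢ` away from the origin, the other
edges are closed and miss `y s`, so near `s` the curve stays in `Jᵢ ⊆ ℝ ∙ eᵢ`; hence `α s` lies
in this line, where it equals `⟪α s, eᵢ⟫ eᵢ`. If `y s = 0`, the difference quotients along the
zero set vanish, so `α s = 0`.
-/

open Set MeasureTheory Filter
open scoped Topology InnerProductSpace

theorem HasDerivAt.mem_of_eventually_mem {𝕜 E : Type*} [NontriviallyNormedField 𝕜]
    [NormedAddCommGroup E] [NormedSpace 𝕜 E] {f : 𝕜 → E} {f' : E} {x : 𝕜}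
    {S : Submodule 𝕜 E} (hS : IsClosed (S : Set E)) {l : Filter 𝕜} [l.NeBot]
    (hl : l ≤ 𝓝[≠] x) (hf : HasDerivAt f f' x) (hfx : f x ∈ S) (hfl : ∀ᶠ t in l, f t ∈ S) :
    f' ∈ S :=
  hS.mem_of_tendsto ((hasDerivAt_iff_tendsto_slope.1 hf).mono_left hl) <|
    hfl.mono fun _ ht => S.smul_mem _ (S.sub_mem ht hfx)

theorem HasDerivAt.eq_zero_of_accPt {𝕜 E : Type*} [NontriviallyNormedField 𝕜]
    [NormedAddCommGroup E] [NormedSpace 𝕜 E] {f : 𝕜 → E} {f' : E} {x : 𝕜}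
    (hf : HasDerivAt f f' x) (hx : AccPt x (𝓟 {t | f t = f x})) : f' = 0 := by
  have : (𝓝[≠] x ⊓ 𝓟 {t | f t = f x}).NeBot := hx
  have hconst : ∀ᶠ t in 𝓝[≠] x ⊓ 𝓟 {t | f t = f x}, f t - f x ∈ (⊥ : Submodule 𝕜 E) :=
    mem_inf_of_right <| mem_principal.2 fun t ht => by simp [ht.out]
  simpa using (hf.sub_const (f x)).mem_of_eventually_mem (by simp)
    inf_le_left (by simp) hconst

theorem Real.ae_accPt_of_mem (s : Set ℝ) : ∀ᵐ x, x ∈ s → AccPt x (𝓟 s) := by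
  have hnull := (countable_setOfPred_isolated_right_within (s := s)).measure_zero volume
  filter_upwards [measure_eq_zero_iff_ae_notMem.1 hnull] with x hx hxs
  by_contra h
  rw [AccPt, not_neBot, ← nhdsWithin_inter'] at h
  exact hx ⟨hxs, le_bot_iff.1 (h ▸ nhdsWithin_mono _ fun t ht => ⟨ne_of_gt ht.2, ht.1⟩)⟩

theorem ae_hasDerivAt_of_eq_add_integral {E : Type*} [NormedAddCommGroup E] [NormedSpace ℝ E]
    [CompleteSpace E] {f y : ℝ → E} {a b : ℝ} (hf : IntervalIntegrable f volume a b)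
    (hy : ∀ s ∈ Icc a b, y s = y a + ∫ t in a..s, f t) :
    ∀ᵐ s ∂volume.restrict (Icc a b), HasDerivAt y (f s) s := by
  rw [← Measure.restrict_congr_set Ioo_ae_eq_Icc]
  filter_upwards [ae_restrict_mem measurableSet_Ioo,
    ae_restrict_of_ae hf.ae_hasDerivAt_integral] with s hs hderiv
  refine ((hderiv (Icc_subset_uIcc (Ioo_subset_Icc_self hs)) a left_mem_uIcc).const_add
    (y a)).congr_of_eventuallyEq ?_
  filter_upwards [isOpen_Ioo.mem_nhds hs] with t ht using hy t (Ioo_subset_Icc_self ht)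

section Ray

variable {E : Type*} [NormedAddCommGroup E]

def closedRay [Module ℝ E] (e : E) : Set E := {p | ∃ r : ℝ, 0 ≤ r ∧ p = r • e}

variable [NormedSpace ℝ E]

theorem closedRay_eq_image (e : E) : closedRay e = (· • e) '' Ici (0 : ℝ) := by
  ext p
  simp [closedRay, eq_comm]

theorem isClosed_closedRay [FiniteDimensional ℝ E] (e : E) : IsClosed (closedRay e) := by
  rw [closedRay_eq_image]
  exact isClosedMap_smul_left e _ isClosed_Ici

theorem closedRay_subset_span (e : E) : closedRay e ⊆ ℝ ∙ e := by
  rintro _ ⟨r, -, rfl⟩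
  exact Submodule.smul_mem _ r (Submodule.mem_span_singleton_self e)

theorem eq_of_mem_closedRay {e e' p : E} (he : ‖e‖ = ‖e'‖) (hp : p ≠ 0)
    (h : p ∈ closedRay e) (h' : p ∈ closedRay e') : e = e' := by
  obtain ⟨r, hr, rfl⟩ := h
  obtain ⟨r', hr', hrr'⟩ := h'
  have hr0 : r ≠ 0 := by rintro rfl; simp at hp
  have he' : ‖e'‖ ≠ 0 := by rw [← he, norm_ne_zero_iff]; rintro rfl; simp at hp
  have hn := congrArg norm hrr'
  rw [norm_smul, norm_smul, Real.norm_of_nonneg hr, Real.norm_of_nonneg hr', he] at hn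
  obtain rfl := mul_right_cancel₀ he' hn
  exact smul_right_injective E hr0 hrr'

theorem eventually_mem_closedRay_of_mem_iUnion [FiniteDimensional ℝ E] {ι : Type*} [Finite ι]
    {e : ι → E} (he : ∀ i, ‖e i‖ = 1) (hinj : Function.Injective e) {i : ι} {p : E}
    (hp : p ≠ 0) (hpi : p ∈ closedRay (e i)) :
    ∀ᶠ q in 𝓝 p, q ∈ ⋃ j, closedRay (e j) → q ∈ closedRay (e i) := by
  have hclosed : IsClosed (⋃ j : {j // j ≠ i}, closedRay (e j)) :=
    isClosed_iUnion_of_finite fun j => isClosed_closedRay _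
  have hp' : p ∉ ⋃ j : {j // j ≠ i}, closedRay (e j) := by
    simp only [mem_iUnion, not_exists]
    exact fun j hj => j.2 (hinj (eq_of_mem_closedRay ((he _).trans (he i).symm) hp hj hpi))
  filter_upwards [hclosed.isOpen_compl.mem_nhds hp'] with q hq hqG
  obtain ⟨j, hj⟩ := mem_iUnion.1 hqG
  by_cases hji : j = i
  · exact hji ▸ hj
  · exact absurd (mem_iUnion.2 ⟨⟨j, hji⟩, hj⟩) hq

theorem sum_indicator_closedRay_diff_zero {ι : Type*} [Fintype ι] {e : ι → E}
    (he : ∀ i, ‖e i‖ = 1) (hinj : Function.Injective e) {i : ι} {p : E}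
    (hp : p ∈ closedRay (e i) \ {0}) (g : ι → E) :
    ∑ j, (closedRay (e j) \ {0}).indicator (fun _ => g j) p = g i := by
  rw [Finset.sum_eq_single_of_mem i (Finset.mem_univ i), indicator_of_mem hp]
  intro j _ hji
  refine indicator_of_notMem (fun hj => hji (hinj ?_)) _
  exact eq_of_mem_closedRay ((he j).trans (he i).symm) hp.2 hj.1 hp.1

end Ray

theorem eq_inner_smul_of_mem_span_singleton {E : Type*} [NormedAddCommGroup E]
    [InnerProductSpace ℝ E] {e v : E} (he : ‖e‖ = 1) (hv : v ∈ ℝ ∙ e) :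
    v = ⟪v, e⟫_ℝ • e := by
  rw [real_inner_comm, ← Submodule.starProjection_unit_singleton ℝ he,
    Submodule.starProjection_eq_self_iff.2 hv]

theorem HasDerivAt.eq_inner_smul_of_mem_closedRay {E : Type*} [NormedAddCommGroup E]
    [InnerProductSpace ℝ E] [FiniteDimensional ℝ E] {ι : Type*} [Finite ι] {e : ι → E}
    (he : ∀ i, ‖e i‖ = 1) (hinj : Function.Injective e) {y : ℝ → E} {v : E} {s : ℝ}
    (hy : HasDerivAt y v s) (hG : ∀ᶠ t in 𝓝 s, y t ∈ ⋃ j, closedRay (e j)) {i : ι}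
    (hys : y s ∈ closedRay (e i) \ {0}) : v = ⟪v, e i⟫_ℝ • e i := by
  have hedge : ∀ᶠ t in 𝓝 s, y t ∈ closedRay (e i) :=
    (hG.and (hy.continuousAt.eventually
      (eventually_mem_closedRay_of_mem_iUnion he hinj hys.2 hys.1))).mono fun _ h => h.2 h.1
  refine eq_inner_smul_of_mem_span_singleton (he i) (hy.mem_of_eventually_mem
    (Submodule.closed_of_finiteDimensional _) le_rfl (closedRay_subset_span _ hys.1) ?_)
  exact eventually_nhdsWithin_of_eventually_nhds (hedge.mono fun _ h => closedRay_subset_span _ h)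

/-- The velocity of an admissible curve on the junction decomposes along the edges:
a.e. `ẏ(s) = ∑ i 1_{y(s) ∈ Jᵢ \ {O}} (ẏ(s)·eᵢ) eᵢ`; in particular the velocity is a
scalar multiple of `eᵢ` whenever `y(s) ∈ Jᵢ \ {O}`. -/
theorem stmt_4 {d N : ℕ} (T : ℝ) (hT : 0 < T)
    (e : Fin (N + 1) → EuclideanSpace ℝ (Fin d))
    (he : ∀ i, ‖e i‖ = 1) (hinj : Function.Injective e)
    (J : Fin (N + 1) → Set (EuclideanSpace ℝ (Fin d)))
    (hJ : ∀ i, J i = {p | ∃ r : ℝ, 0 ≤ r ∧ p = r • e i})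
    (G : Set (EuclideanSpace ℝ (Fin d)))
    (hG : G = ⋃ i, J i)
    (y α : ℝ → EuclideanSpace ℝ (Fin d))
    (hα : MemLp α 2 (volume.restrict (Icc (0 : ℝ) T)))
    (hy : ∀ s ∈ Icc (0 : ℝ) T, (y s = y 0 + ∫ τ in (0 : ℝ)..s, α τ) ∧ y s ∈ G) :
    (∀ᵐ s ∂(volume.restrict (Icc (0 : ℝ) T)),
      α s = ∑ i : Fin (N + 1),
        (J i \ {0}).indicator (fun _ => ((inner ℝ (α s) (e i) : ℝ)) • e i) (y s)) ∧
    (∀ᵐ s ∂(volume.restrict (Icc (0 : ℝ) T)),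
      ∀ i, y s ∈ J i \ {0} → ∃ c : ℝ, α s = c • e i) := by
  obtain rfl : J = fun i => closedRay (e i) := funext hJ
  subst hG
  have hint : IntervalIntegrable α volume 0 T :=
    (intervalIntegrable_iff_integrableOn_Icc_of_le hT.le).2 (hα.integrable one_le_two)
  have hderiv := ae_hasDerivAt_of_eq_add_integral hint fun s hs => (hy s hs).1
  have hG : ∀ᵐ s ∂volume.restrict (Icc (0 : ℝ) T),
      ∀ᶠ t in 𝓝 s, y t ∈ ⋃ i, closedRay (e i) := by
    rw [← Measure.restrict_congr_set Ioo_ae_eq_Icc]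
    filter_upwards [ae_restrict_mem measurableSet_Ioo] with s hs
    filter_upwards [isOpen_Ioo.mem_nhds hs] with t ht using (hy t (Ioo_subset_Icc_self ht)).2
  have hacc : ∀ᵐ s ∂volume.restrict (Icc (0 : ℝ) T),
      y s = 0 → AccPt s (𝓟 {t | y t = 0}) :=
    ae_restrict_of_ae (Real.ae_accPt_of_mem _)
  have hvel : ∀ᵐ s ∂volume.restrict (Icc (0 : ℝ) T),
      ∀ i, y s ∈ closedRay (e i) \ {0} → α s = ⟪α s, e i⟫_ℝ • e i := by
    filter_upwards [hderiv, hG] with s hs hGs i using hs.eq_inner_smul_of_mem_closedRay he hinj hGs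
  refine ⟨?_, hvel.mono fun s hs i hi => ⟨_, hs i hi⟩⟩
  filter_upwards [hderiv, hG, hacc, hvel] with s hs hGs hacc_s hvel_s
  by_cases hys : y s = 0
  · simp [hys, hs.eq_zero_of_accPt (by simpa only [hys] using hacc_s hys)]
  · obtain ⟨i, hi⟩ := mem_iUnion.1 hGs.self_of_nhds
    rw [sum_indicator_closedRay_diff_zero he hinj ⟨hi, hys⟩]
    exact hvel_s i ⟨hi, hys⟩
end

section
/- Trajectory approximation from a nearby initial point: let x, x_n ∈ 𝒢 lie on the same edge J₁ with δ_n := d(x_n, x) → 0, and let (y,α) ∈ Γ[x] be an admissible trajectory on [0,T]. Define α_n(s) = ±e₁ for s ∈ [0,δ_n] (moving from x_n to x at unit speed) and α_n(s) = (T/(T−δ_n)) α((s−δ_n)T/(T−δ_n)) for s ∈ (δ_n, T], and let y_n be the corresponding curve from x_n. Then (y_n, α_n) ∈ Γ[x_n], y_n(T) = y(T), sup_{[0,T]} d(y_n(·), y(·)) ≤ δ_n + ‖α‖_{L²} √δ_n, and ‖α_n‖_{L²}² ≤ ‖α‖_{L²}² + δ_n (1 + ‖α‖_{L²}²/(T−δ_n)).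 -/
open Set MeasureTheory

/-!
The control `αₙ` first walks along the edge `J 0` from `xₙ` to `x` at unit speed and then runs
`α` sped up by `λ = T / (T - δ)`, so that `yₙ s = y ((s - δ) λ)` for `s ≥ δ`. This gives
admissibility, `yₙ T = y T`, and the energy `δ + λ ‖α‖₂²`, which is the stated bound.

The distance estimate rests on the Hölder bound `d (y u) (y v) ≤ ‖α‖₂ √(v - u)`. On one edge `d`
is the Euclidean distance; a path between two points on no common edge must pass through the
junction point `0` (the edges are closed and meet only at `0`, and `y [u, v]` is connected), so
its length `∫ ‖α‖` dominates `‖y u‖ + ‖y v‖`. The time lag `s - (s - δ) λ` is at most `δ`, and on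
`[0, δ]` the triangle inequality through `x` costs the extra `δ`.
-/

section HalfLine

variable {E : Type*} [NormedAddCommGroup E] [NormedSpace ℝ E]

def halfLine (v : E) : Set E := {p | ∃ r : ℝ, 0 ≤ r ∧ p = r • v}

theorem isClosed_halfLine (v : E) : IsClosed (halfLine v) := by
  have : halfLine v = (fun r : ℝ => r • v) '' Ici 0 := by
    ext p
    simp [halfLine, eq_comm]
  exact this ▸ isClosedMap_smul_left v _ isClosed_Ici

theorem pairwise_halfLine_inter_subset_zero {ι : Type*} {e : ι → E} (he : ∀ i, ‖e i‖ = 1)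
    (hinj : Function.Injective e) :
    Pairwise fun i j => halfLine (e i) ∩ halfLine (e j) ⊆ {0} := by
  rintro i j hij p ⟨⟨r, hr, rfl⟩, s, hs, h⟩
  have hrs : r = s := by
    simpa [norm_smul, he, abs_of_nonneg hr, abs_of_nonneg hs] using congrArg norm h
  rcases hr.eq_or_lt with rfl | hr0
  · exact zero_smul ℝ (e i)
  · exact absurd (hinj (smul_right_injective E hr0.ne' (h.trans (by rw [hrs])))) hij

theorem smul_add_abs_sub_smul_toward (a b : ℝ) (v : E) :
    b • v + |b - a| • (if b ≤ a then v else -v) = a • v := by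
  split_ifs with hba
  · rw [abs_of_nonpos (sub_nonpos.2 hba), ← add_smul]; congr 1; ring
  · rw [abs_of_pos (sub_pos.2 (not_le.1 hba)), smul_neg, ← sub_eq_add_neg, ← sub_smul]
    congr 1; ring

theorem smul_add_smul_toward_mem_halfLine {a b s : ℝ} (v : E) (ha : 0 ≤ a) (hb : 0 ≤ b)
    (hs : s ∈ Icc 0 |b - a|) : b • v + s • (if b ≤ a then v else -v) ∈ halfLine v := by
  split_ifs with hba
  · exact ⟨b + s, by linarith [hs.1], by rw [add_smul]⟩
  · rw [abs_of_pos (sub_pos.2 (not_le.1 hba))] at hs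
    exact ⟨b - s, by linarith [hs.2], by rw [sub_smul, smul_neg, sub_eq_add_neg]⟩

end HalfLine

theorem IsPreconnected.mem_of_pairwise_inter_subset {X ι : Type*} [TopologicalSpace X] [Finite ι]
    {J : ι → Set X} {p : X} (hJc : ∀ i, IsClosed (J i))
    (hJp : Pairwise fun i j => J i ∩ J j ⊆ {p}) {S : Set X} (hS : IsPreconnected S)
    (hSJ : S ⊆ ⋃ i, J i) {q q' : X} (hq : q ∈ S) (hq' : q' ∈ S)
    (hqq' : ¬ ∃ i, q ∈ J i ∧ q' ∈ J i) : p ∈ S := by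
  obtain ⟨i, hqi⟩ := mem_iUnion.1 (hSJ hq)
  obtain ⟨j, hq'j⟩ := mem_iUnion.1 (hSJ hq')
  have hji : j ≠ i := by rintro rfl; exact hqq' ⟨j, hqi, hq'j⟩
  have hrest : IsClosed (⋃ k ∈ {k | k ≠ i}, J k) :=
    (toFinite _).isClosed_biUnion fun k _ => hJc k
  have hcover : S ⊆ J i ∪ ⋃ k ∈ {k | k ≠ i}, J k := by
    intro z hz
    obtain ⟨k, hzk⟩ := mem_iUnion.1 (hSJ hz)
    by_cases hki : k = i
    · exact Or.inl (hki ▸ hzk)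
    · exact Or.inr (mem_biUnion hki hzk)
  obtain ⟨z, hzS, hzi, hzrest⟩ := isPreconnected_closed_iff.1 hS _ _ (hJc i) hrest hcover
    ⟨q, hq, hqi⟩ ⟨q', hq', mem_biUnion hji hq'j⟩
  obtain ⟨k, hki, hzk⟩ := mem_iUnion₂.1 hzrest
  rwa [← mem_singleton_iff.1 (hJp hki ⟨hzk, hzi⟩)]

section JunctionDist

variable {E : Type*} [NormedAddCommGroup E] {ι : Type*} {J : ι → Set E} {D : E → E → ℝ}

/-- `D` is the geodesic distance on the network `⋃ i, J i` whose edges `J i` meet at `0`. -/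
structure IsJunctionDist (J : ι → Set E) (D : E → E → ℝ) : Prop where
  same : ∀ x ∈ ⋃ i, J i, ∀ y ∈ ⋃ i, J i, (∃ i, x ∈ J i ∧ y ∈ J i) → D x y = ‖x - y‖
  diff : ∀ x ∈ ⋃ i, J i, ∀ y ∈ ⋃ i, J i, (¬ ∃ i, x ∈ J i ∧ y ∈ J i) → D x y = ‖x‖ + ‖y‖

namespace IsJunctionDist

theorem norm_sub_le (hD : IsJunctionDist J D) {p q : E} (hp : p ∈ ⋃ i, J i)
    (hq : q ∈ ⋃ i, J i) : ‖p - q‖ ≤ D p q := by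
  by_cases h : ∃ i, p ∈ J i ∧ q ∈ J i
  · exact (hD.same p hp q hq h).ge
  · exact (hD.diff p hp q hq h).ge.trans' (_root_.norm_sub_le p q)

theorem triangle (hD : IsJunctionDist J D) (hJ0 : Pairwise fun i j => J i ∩ J j ⊆ {0})
    {p q r : E} (hp : p ∈ ⋃ i, J i) (hq : q ∈ ⋃ i, J i) (hr : r ∈ ⋃ i, J i) :
    D p q ≤ D p r + D r q := by
  have hpr := hD.norm_sub_le hp hr
  have hrq := hD.norm_sub_le hr hq
  by_cases hpq : ∃ i, p ∈ J i ∧ q ∈ J i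
  · rw [hD.same p hp q hq hpq]
    exact (norm_sub_le_norm_sub_add_norm_sub p r q).trans (add_le_add hpr hrq)
  rw [hD.diff p hp q hq hpq]
  by_cases hr0 : r = 0
  · subst hr0
    rw [sub_zero] at hpr
    rw [zero_sub, norm_neg] at hrq
    exact add_le_add hpr hrq
  -- away from the junction point, `r` lies on a single edge, which misses `p` or `q`
  obtain ⟨i, hri⟩ := mem_iUnion.1 hr
  have hedge : ∀ j, r ∈ J j → j = i := fun j hrj => by
    by_contra hji
    exact hr0 (hJ0 hji ⟨hrj, hri⟩)
  by_cases hpi : p ∈ J i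
  · have hrq' : ¬ ∃ j, r ∈ J j ∧ q ∈ J j := fun ⟨j, hrj, hqj⟩ =>
      hpq ⟨i, hpi, hedge j hrj ▸ hqj⟩
    rw [hD.diff r hr q hq hrq']
    linarith [norm_le_norm_sub_add p r]
  · have hpr' : ¬ ∃ j, p ∈ J j ∧ r ∈ J j := fun ⟨j, hpj, hrj⟩ => hpi (hedge j hrj ▸ hpj)
    rw [hD.diff p hp r hr hpr']
    linarith [norm_le_norm_sub_add q r, norm_sub_rev r q]

end IsJunctionDist

end JunctionDist

section Integral

variable {E : Type*} [NormedAddCommGroup E]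

theorem integral_norm_le_sqrt_mul_sqrt {α : ℝ → E} {u v : ℝ} (huv : u ≤ v)
    (hα : MemLp α 2 (volume.restrict (Ioc u v))) :
    ∫ τ in u..v, ‖α τ‖ ≤ √(∫ τ in u..v, ‖α τ‖ ^ 2) * √(v - u) := by
  have h2 : ENNReal.ofReal 2 = 2 := by norm_num
  have holder := integral_mul_le_Lp_mul_Lq_of_nonneg Real.HolderConjugate.two_two
    (ae_of_all _ fun τ => norm_nonneg (α τ)) (ae_of_all _ fun _ => zero_le_one)
    (h2 ▸ hα.norm) (h2 ▸ memLp_const (1 : ℝ))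
  simp only [mul_one, Real.rpow_two, one_pow, setIntegral_const, smul_eq_mul,
    Real.volume_real_Ioc_of_le huv] at holder
  rwa [intervalIntegral.integral_of_le huv, intervalIntegral.integral_of_le huv,
    Real.sqrt_eq_rpow, Real.sqrt_eq_rpow]

theorem MeasureTheory.MemLp.intervalIntegrable {α : ℝ → E} {a b : ℝ} (hab : a ≤ b)
    (hα : MemLp α 2 (volume.restrict (Icc a b))) : IntervalIntegrable α volume a b :=
  (intervalIntegrable_iff_integrableOn_Icc_of_le hab).2 (hα.integrable one_le_two)

theorem MeasureTheory.MemLp.intervalIntegrable_norm_sq {α : ℝ → E} {a b : ℝ} (hab : a ≤ b)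
    (hα : MemLp α 2 (volume.restrict (Icc a b))) :
    IntervalIntegrable (fun τ => ‖α τ‖ ^ 2) volume a b :=
  (intervalIntegrable_iff_integrableOn_Icc_of_le hab).2
    ((memLp_two_iff_integrable_sq_norm hα.1).1 hα)

end Integral

section Trajectory

variable {E : Type*} [NormedAddCommGroup E] [NormedSpace ℝ E] {ι : Type*}

theorem IsJunctionDist.le_integral_norm [Finite ι] {J : ι → Set E} {D : E → E → ℝ}
    (hD : IsJunctionDist J D) (hJc : ∀ i, IsClosed (J i))
    (hJ0 : Pairwise fun i j => J i ∩ J j ⊆ {0}) {y α : ℝ → E} {u v : ℝ} (huv : u ≤ v)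
    (hα : IntervalIntegrable α volume u v) (hy : ∀ s ∈ Icc u v, y s = y u + ∫ τ in u..s, α τ)
    (hyJ : ∀ s ∈ Icc u v, y s ∈ ⋃ i, J i) : D (y u) (y v) ≤ ∫ τ in u..v, ‖α τ‖ := by
  have hu : u ∈ Icc u v := left_mem_Icc.2 huv
  have hv : v ∈ Icc u v := right_mem_Icc.2 huv
  have hα' : ∀ s ∈ Icc u v, ∀ t ∈ Icc u v, IntervalIntegrable α volume s t :=
    fun s hs t ht => hα.mono_set (uIcc_of_le huv ▸ uIcc_subset_Icc hs ht)
  have hsub : ∀ s ∈ Icc u v, ∀ t ∈ Icc u v, s ≤ t → ‖y t - y s‖ ≤ ∫ τ in s..t, ‖α τ‖ := by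
    intro s hs t ht hst
    rw [hy s hs, hy t ht, add_sub_add_left_eq_sub,
      intervalIntegral.integral_interval_sub_left (hα' u hu t ht) (hα' u hu s hs)]
    exact intervalIntegral.norm_integral_le_integral_norm hst
  by_cases hsame : ∃ i, y u ∈ J i ∧ y v ∈ J i
  · rw [hD.same _ (hyJ u hu) _ (hyJ v hv) hsame, norm_sub_rev]
    exact hsub u hu v hv huv
  -- a continuous path between points on no common edge passes through the junction point
  have hcont : ContinuousOn y (Icc u v) := by
    refine (continuousOn_const.add ?_).congr hy
    simpa only [uIcc_of_le huv] using
      intervalIntegral.continuousOn_primitive_interval' hα left_mem_uIcc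
  obtain ⟨t, ht, hyt⟩ := (isPreconnected_Icc.image y hcont).mem_of_pairwise_inter_subset hJc hJ0
    (image_subset_iff.2 hyJ) (mem_image_of_mem y hu) (mem_image_of_mem y hv) hsame
  rw [hD.diff _ (hyJ u hu) _ (hyJ v hv) hsame,
    ← intervalIntegral.integral_add_adjacent_intervals (hα' u hu t ht).norm (hα' t ht v hv).norm]
  have hut := hsub u hu t ht ht.1
  have htv := hsub t ht v hv ht.2
  rw [hyt, zero_sub, norm_neg] at hut
  rw [hyt, sub_zero] at htv
  exact add_le_add hut htv

theorem IsJunctionDist.le_sqrt_mul_sqrt [Finite ι] {J : ι → Set E} {D : E → E → ℝ}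
    (hD : IsJunctionDist J D) (hJc : ∀ i, IsClosed (J i))
    (hJ0 : Pairwise fun i j => J i ∩ J j ⊆ {0}) {T : ℝ} {x : E} {y α : ℝ → E}
    (hα : MemLp α 2 (volume.restrict (Icc 0 T)))
    (hy : ∀ s ∈ Icc 0 T, y s = x + ∫ τ in 0..s, α τ ∧ y s ∈ ⋃ i, J i) {u v : ℝ} (hu : 0 ≤ u)
    (huv : u ≤ v) (hvT : v ≤ T) :
    D (y u) (y v) ≤ √(∫ τ in 0..T, ‖α τ‖ ^ 2) * √(v - u) := by
  have hT : 0 ≤ T := hu.trans (huv.trans hvT)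
  have hsub : Icc u v ⊆ Icc 0 T := Icc_subset_Icc hu hvT
  have hu' : u ∈ Icc 0 T := hsub (left_mem_Icc.2 huv)
  have hI : ∀ s ∈ Icc 0 T, ∀ t ∈ Icc 0 T, IntervalIntegrable α volume s t := fun s hs t ht =>
    (hα.intervalIntegrable hT).mono_set
      (uIcc_subset_uIcc (Icc_subset_uIcc hs) (Icc_subset_uIcc ht))
  have hy' : ∀ s ∈ Icc u v, y s = y u + ∫ τ in u..s, α τ := fun s hs => by
    rw [(hy s (hsub hs)).1, (hy u hu').1, add_assoc,
      intervalIntegral.integral_add_adjacent_intervals (hI 0 ⟨le_rfl, hT⟩ u hu')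
        (hI u hu' s (hsub hs))]
  calc D (y u) (y v) ≤ ∫ τ in u..v, ‖α τ‖ :=
        hD.le_integral_norm hJc hJ0 huv (hI u hu' v (hsub (right_mem_Icc.2 huv))) hy'
          fun s hs => (hy s (hsub hs)).2
    _ ≤ √(∫ τ in u..v, ‖α τ‖ ^ 2) * √(v - u) :=
        integral_norm_le_sqrt_mul_sqrt huv
          (hα.mono_measure (Measure.restrict_mono (Ioc_subset_Icc_self.trans hsub) le_rfl))
    _ ≤ √(∫ τ in 0..T, ‖α τ‖ ^ 2) * √(v - u) := by
        gcongr
        exact intervalIntegral.integral_mono_interval hu huv hvT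
          (ae_of_all _ fun τ => sq_nonneg ‖α τ‖) (hα.intervalIntegrable_norm_sq hT)

end Trajectory

section Concat

variable {E : Type*} [NormedAddCommGroup E] [NormedSpace ℝ E]

theorem integral_smul_comp_sub_mul (f : ℝ → E) (c d s : ℝ) :
    ∫ τ in d..s, c • f ((τ - d) * c) = ∫ τ in 0..(s - d) * c, f τ := by
  rw [intervalIntegral.integral_smul,
    intervalIntegral.integral_comp_sub_right (fun τ => f (τ * c)), sub_self,
    intervalIntegral.smul_integral_comp_mul_right, zero_mul]

theorem sub_mul_div_sub_mem_Icc {δ T s : ℝ} (hδ : 0 ≤ δ) (hδT : δ < T) (hs : s ∈ Icc δ T) :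
    (s - δ) * (T / (T - δ)) ∈ Icc (s - δ) s := by
  have hTδ : 0 < T - δ := sub_pos.2 hδT
  constructor
  · exact le_mul_of_one_le_right (sub_nonneg.2 hs.1) ((one_le_div hTδ).2 (by linarith))
  · rw [← mul_div_assoc, div_le_iff₀ hTδ]
    nlinarith [hs.2]

/-- The control that moves with constant velocity `c` on `[0, δ]` and then runs `α`,
sped up by the factor `T / (T - δ)`, so that all of `α` on `[0, T]` fits into `[δ, T]`. -/
noncomputable def concatRescaled (c : E) (δ T : ℝ) (α : ℝ → E) (s : ℝ) : E :=
  if s ≤ δ then c else (T / (T - δ)) • α ((s - δ) * (T / (T - δ)))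

variable {c : E} {δ T : ℝ} {α : ℝ → E}

theorem intervalIntegrable_concatRescaled (hδ : 0 ≤ δ) (hδT : δ < T)
    (hα : IntervalIntegrable α volume 0 T) :
    IntervalIntegrable (concatRescaled c δ T α) volume 0 T := by
  have hk : T / (T / (T - δ)) = T - δ := by
    rw [div_div_cancel₀ (hδ.trans_lt hδT).ne']
  refine IntervalIntegrable.trans (b := δ) ?_ ?_
  · refine (intervalIntegrable_const (c := c)).congr fun s hs => ?_
    rw [uIoc_of_le hδ] at hs
    exact (if_pos hs.2).symm
  · have hcomp := ((hα.comp_mul_right (c := T / (T - δ))).comp_sub_right δ).smul (T / (T - δ))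
    rw [zero_div, zero_add, hk, sub_add_cancel] at hcomp
    refine hcomp.congr fun s hs => ?_
    rw [uIoc_of_le hδT.le] at hs
    exact (if_neg (not_le.2 hs.1)).symm

theorem integral_concatRescaled_of_le [CompleteSpace E] {s : ℝ} (hs : s ∈ Icc 0 δ) :
    ∫ τ in 0..s, concatRescaled c δ T α τ = s • c := by
  rw [intervalIntegral.integral_congr (f := concatRescaled c δ T α) (g := fun _ => c)
      fun τ hτ => if_pos ((uIcc_of_le hs.1 ▸ hτ).2.trans hs.2),
    intervalIntegral.integral_const, sub_zero]

theorem integral_concatRescaled [CompleteSpace E] (hδ : 0 ≤ δ) (hδT : δ < T)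
    (hα : IntervalIntegrable α volume 0 T) {s : ℝ} (hs : s ∈ Icc δ T) :
    ∫ τ in 0..s, concatRescaled c δ T α τ = δ • c + ∫ τ in 0..(s - δ) * (T / (T - δ)), α τ := by
  have hint : ∀ u ∈ Icc 0 T, ∀ v ∈ Icc 0 T,
      IntervalIntegrable (concatRescaled c δ T α) volume u v := fun u hu v hv =>
    (intervalIntegrable_concatRescaled hδ hδT hα).mono_set
      (uIcc_subset_uIcc (Icc_subset_uIcc hu) (Icc_subset_uIcc hv))
  have hδ' : δ ∈ Icc 0 T := ⟨hδ, hδT.le⟩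
  rw [← intervalIntegral.integral_add_adjacent_intervals (hint 0 ⟨le_rfl, hδ.trans hδT.le⟩ δ hδ')
      (hint δ hδ' s ⟨hδ.trans hs.1, hs.2⟩),
    integral_concatRescaled_of_le ⟨hδ, le_rfl⟩,
    intervalIntegral.integral_congr_ae (f := concatRescaled c δ T α)
      (g := fun τ => (T / (T - δ)) • α ((τ - δ) * (T / (T - δ))))
      (ae_of_all _ fun τ hτ => if_neg (not_le.2 (uIoc_of_le hs.1 ▸ hτ).1)),
    integral_smul_comp_sub_mul]

theorem add_integral_concatRescaled [CompleteSpace E] {x₀ x : E} {y : ℝ → E} (hδ : 0 ≤ δ)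
    (hδT : δ < T) (hα : IntervalIntegrable α volume 0 T)
    (hy : ∀ s ∈ Icc 0 T, y s = x + ∫ τ in 0..s, α τ)
    (hx : x₀ + δ • c = x) {s : ℝ} (hs : s ∈ Icc δ T) :
    x₀ + ∫ τ in 0..s, concatRescaled c δ T α τ = y ((s - δ) * (T / (T - δ))) := by
  have hmem := sub_mul_div_sub_mem_Icc hδ hδT hs
  rw [integral_concatRescaled hδ hδT hα hs, ← add_assoc, hx,
    hy _ ⟨(sub_nonneg.2 hs.1).trans hmem.1, hmem.2.trans hs.2⟩]

theorem norm_sq_concatRescaled (hδ : 0 ≤ δ) (hδT : δ < T) (s : ℝ) :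
    ‖concatRescaled c δ T α s‖ ^ 2 =
      concatRescaled (‖c‖ ^ 2) δ T (fun τ => T / (T - δ) * ‖α τ‖ ^ 2) s := by
  have hk : 0 ≤ T / (T - δ) := div_nonneg (hδ.trans hδT.le) (sub_pos.2 hδT).le
  unfold concatRescaled
  split_ifs
  · rfl
  · rw [norm_smul, Real.norm_of_nonneg hk, smul_eq_mul]
    ring

theorem memLp_concatRescaled (hδ : 0 ≤ δ) (hδT : δ < T)
    (hα : MemLp α 2 (volume.restrict (Icc 0 T))) :
    MemLp (concatRescaled c δ T α) 2 (volume.restrict (Icc 0 T)) := by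
  have hT : 0 ≤ T := hδ.trans hδT.le
  refine (memLp_two_iff_integrable_sq_norm ?_).2 ?_
  · exact ((intervalIntegrable_iff_integrableOn_Icc_of_le hT).1
      (intervalIntegrable_concatRescaled hδ hδT (hα.intervalIntegrable hT))).aestronglyMeasurable
  · simp_rw [norm_sq_concatRescaled hδ hδT]
    exact (intervalIntegrable_iff_integrableOn_Icc_of_le hT).1
      (intervalIntegrable_concatRescaled hδ hδT ((hα.intervalIntegrable_norm_sq hT).const_mul _))

theorem integral_norm_sq_concatRescaled (hc : ‖c‖ = 1) (hδ : 0 ≤ δ) (hδT : δ < T)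
    (hα : MemLp α 2 (volume.restrict (Icc 0 T))) :
    ∫ τ in 0..T, ‖concatRescaled c δ T α τ‖ ^ 2 =
      δ + T / (T - δ) * ∫ τ in 0..T, ‖α τ‖ ^ 2 := by
  have hT : 0 ≤ T := hδ.trans hδT.le
  simp_rw [norm_sq_concatRescaled hδ hδT]
  rw [integral_concatRescaled hδ hδT ((hα.intervalIntegrable_norm_sq hT).const_mul _)
      ⟨hδT.le, le_rfl⟩, mul_div_cancel₀ _ (sub_pos.2 hδT).ne', hc, one_pow, smul_eq_mul, mul_one,
    intervalIntegral.integral_const_mul]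

end Concat

section Approximation

variable {E : Type*} [NormedAddCommGroup E] [NormedSpace ℝ E] [CompleteSpace E] {ι : Type*}
  {J : ι → Set E} {i₀ : ι} {c x₀ x : E} {δ T : ℝ} {y α : ℝ → E}

theorem add_integral_concatRescaled_self (hδ : 0 ≤ δ) (hδT : δ < T)
    (hα : IntervalIntegrable α volume 0 T) (hy : ∀ s ∈ Icc 0 T, y s = x + ∫ τ in 0..s, α τ)
    (hx : x₀ + δ • c = x) : x₀ + ∫ τ in 0..T, concatRescaled c δ T α τ = y T := by
  rw [add_integral_concatRescaled hδ hδT hα hy hx ⟨hδT.le, le_rfl⟩,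
    mul_div_cancel₀ _ (sub_pos.2 hδT).ne']

theorem add_integral_concatRescaled_mem (hδ : 0 ≤ δ) (hδT : δ < T)
    (hα : IntervalIntegrable α volume 0 T)
    (hy : ∀ s ∈ Icc 0 T, y s = x + ∫ τ in 0..s, α τ ∧ y s ∈ ⋃ i, J i) (hx : x₀ + δ • c = x)
    (hseg : ∀ s ∈ Icc 0 δ, x₀ + s • c ∈ J i₀) {s : ℝ} (hs : s ∈ Icc 0 T) :
    x₀ + ∫ τ in 0..s, concatRescaled c δ T α τ ∈ ⋃ i, J i := by
  rcases le_total s δ with hsδ | hδs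
  · rw [integral_concatRescaled_of_le ⟨hs.1, hsδ⟩]
    exact mem_iUnion_of_mem i₀ (hseg s ⟨hs.1, hsδ⟩)
  · obtain ⟨h₁, h₂⟩ := sub_mul_div_sub_mem_Icc hδ hδT ⟨hδs, hs.2⟩
    rw [add_integral_concatRescaled hδ hδT hα (fun s hs => (hy s hs).1) hx ⟨hδs, hs.2⟩]
    exact (hy _ ⟨by linarith, by linarith [hs.2]⟩).2

theorem IsJunctionDist.add_integral_concatRescaled_le [Finite ι] {D : E → E → ℝ}
    (hD : IsJunctionDist J D) (hJc : ∀ i, IsClosed (J i))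
    (hJ0 : Pairwise fun i j => J i ∩ J j ⊆ {0}) (hc : ‖c‖ = 1) (hδ : 0 ≤ δ) (hδT : δ < T)
    (hα : MemLp α 2 (volume.restrict (Icc 0 T)))
    (hy : ∀ s ∈ Icc 0 T, y s = x + ∫ τ in 0..s, α τ ∧ y s ∈ ⋃ i, J i) (hx : x₀ + δ • c = x)
    (hseg : ∀ s ∈ Icc 0 δ, x₀ + s • c ∈ J i₀) {s : ℝ} (hs : s ∈ Icc 0 T) :
    D (x₀ + ∫ τ in 0..s, concatRescaled c δ T α τ) (y s) ≤
      δ + √(∫ τ in 0..T, ‖α τ‖ ^ 2) * √δ := by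
  have hHolder := fun u v => hD.le_sqrt_mul_sqrt hJc hJ0 hα hy (u := u) (v := v)
  rcases le_total s δ with hsδ | hδs
  · have h0 : (0 : ℝ) ∈ Icc 0 T := ⟨le_rfl, hs.1.trans hs.2⟩
    have hy0 : y 0 = x := by simpa using (hy 0 h0).1
    have hsJ := hseg s ⟨hs.1, hsδ⟩
    have hxJ : x ∈ J i₀ := hx ▸ hseg δ ⟨hδ, le_rfl⟩
    rw [integral_concatRescaled_of_le ⟨hs.1, hsδ⟩]
    calc D (x₀ + s • c) (y s) ≤ D (x₀ + s • c) (y 0) + D (y 0) (y s) :=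
          hD.triangle hJ0 (mem_iUnion_of_mem i₀ hsJ) (hy s hs).2 (hy 0 h0).2
      _ ≤ δ + √(∫ τ in 0..T, ‖α τ‖ ^ 2) * √δ := add_le_add ?_ ?_
    · rw [hy0, hD.same _ (mem_iUnion_of_mem i₀ hsJ) _ (mem_iUnion_of_mem i₀ hxJ) ⟨i₀, hsJ, hxJ⟩,
        ← hx, add_sub_add_left_eq_sub, ← sub_smul, norm_smul, hc, mul_one,
        Real.norm_of_nonpos (by linarith)]
      linarith [hs.1]
    · exact (hHolder 0 s le_rfl hs.1 hs.2).trans (by gcongr; linarith)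
  · obtain ⟨h₁, h₂⟩ := sub_mul_div_sub_mem_Icc hδ hδT ⟨hδs, hs.2⟩
    rw [add_integral_concatRescaled hδ hδT (hα.intervalIntegrable (hδ.trans hδT.le))
      (fun s hs => (hy s hs).1) hx ⟨hδs, hs.2⟩]
    calc _ ≤ √(∫ τ in 0..T, ‖α τ‖ ^ 2) * √(s - (s - δ) * (T / (T - δ))) :=
          hHolder _ _ (by linarith) h₂ hs.2
      _ ≤ √(∫ τ in 0..T, ‖α τ‖ ^ 2) * √δ := by gcongr; linarith
      _ ≤ δ + √(∫ τ in 0..T, ‖α τ‖ ^ 2) * √δ := le_add_of_nonneg_left hδ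

end Approximation

theorem stmt_10_general {d N : ℕ} (T : ℝ) (hT : 0 < T)
    (e : Fin (N + 1) → EuclideanSpace ℝ (Fin d))
    (he : ∀ i, ‖e i‖ = 1) (hinj : Function.Injective e)
    (J : Fin (N + 1) → Set (EuclideanSpace ℝ (Fin d)))
    (hJ : ∀ i, J i = {p | ∃ r : ℝ, 0 ≤ r ∧ p = r • e i})
    (G : Set (EuclideanSpace ℝ (Fin d)))
    (hG : G = ⋃ i, J i)
    -- geodesic distance
    (D : EuclideanSpace ℝ (Fin d) → EuclideanSpace ℝ (Fin d) → ℝ)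
    (hDsame : ∀ x ∈ G, ∀ y ∈ G, (∃ i, x ∈ J i ∧ y ∈ J i) → D x y = ‖x - y‖)
    (hDdiff : ∀ x ∈ G, ∀ y ∈ G, (¬ ∃ i, x ∈ J i ∧ y ∈ J i) → D x y = ‖x‖ + ‖y‖)
    -- initial points on the first edge
    (a : ℝ) (b : ℕ → ℝ) (ha : 0 ≤ a) (hb : ∀ n, 0 ≤ b n)
    (x : EuclideanSpace ℝ (Fin d)) (hx : x = a • e 0)
    (xn : ℕ → EuclideanSpace ℝ (Fin d)) (hxn : ∀ n, xn n = b n • e 0)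
    (δ : ℕ → ℝ) (hδ : ∀ n, δ n = |b n - a|) (hδT : ∀ n, δ n < T)
    -- the reference admissible trajectory from `x`
    (y α : ℝ → EuclideanSpace ℝ (Fin d))
    (hα : MemLp α 2 (volume.restrict (Icc (0 : ℝ) T)))
    (hy : ∀ s ∈ Icc (0 : ℝ) T, (y s = x + ∫ τ in (0 : ℝ)..s, α τ) ∧ y s ∈ G)
    -- the approximating controls and curves
    (αn : ℕ → ℝ → EuclideanSpace ℝ (Fin d))
    (hαn : ∀ n s, αn n s =
      if s ≤ δ n then (if b n ≤ a then e 0 else -e 0)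
      else (T / (T - δ n)) • α ((s - δ n) * (T / (T - δ n))))
    (yn : ℕ → ℝ → EuclideanSpace ℝ (Fin d))
    (hyn : ∀ n s, yn n s = xn n + ∫ τ in (0 : ℝ)..s, αn n τ) :
    ∀ n,
      (MemLp (αn n) 2 (volume.restrict (Icc (0 : ℝ) T)) ∧
        ∀ s ∈ Icc (0 : ℝ) T, yn n s ∈ G) ∧
      yn n T = y T ∧
      (∀ s ∈ Icc (0 : ℝ) T, D (yn n s) (y s) ≤
        δ n + Real.sqrt (∫ τ in (0 : ℝ)..T, ‖α τ‖ ^ 2) * Real.sqrt (δ n)) ∧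
      (∫ τ in (0 : ℝ)..T, ‖αn n τ‖ ^ 2) ≤
        (∫ τ in (0 : ℝ)..T, ‖α τ‖ ^ 2) +
          δ n * (1 + (∫ τ in (0 : ℝ)..T, ‖α τ‖ ^ 2) / (T - δ n)) := by
  have hJ' : J = fun i => halfLine (e i) := funext hJ
  subst hJ' hG
  have hD : IsJunctionDist (fun i => halfLine (e i)) D := ⟨hDsame, hDdiff⟩
  have hJc := fun i => isClosed_halfLine (e i)
  have hJ0 := pairwise_halfLine_inter_subset_zero he hinj
  have hαI := hα.intervalIntegrable hT.le
  intro n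
  set c := if b n ≤ a then e 0 else -e 0
  have hc : ‖c‖ = 1 := by simp only [c]; split_ifs <;> simp [he]
  have hδn : 0 ≤ δ n := hδ n ▸ abs_nonneg _
  have hx₀ : xn n + δ n • c = x := by
    rw [hxn, hx, hδ]
    exact smul_add_abs_sub_smul_toward a (b n) (e 0)
  have hseg : ∀ s ∈ Icc 0 (δ n), xn n + s • c ∈ halfLine (e 0) := fun s hs =>
    hxn n ▸ smul_add_smul_toward_mem_halfLine (e 0) ha (hb n) (hδ n ▸ hs)
  have hαn' : αn n = concatRescaled c (δ n) T α := funext (hαn n)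
  simp only [hyn, hαn']
  refine ⟨⟨memLp_concatRescaled hδn (hδT n) hα, fun s hs =>
      add_integral_concatRescaled_mem hδn (hδT n) hαI hy hx₀ hseg hs⟩,
    add_integral_concatRescaled_self hδn (hδT n) hαI (fun s hs => (hy s hs).1) hx₀,
    fun s hs => hD.add_integral_concatRescaled_le hJc hJ0 hc hδn (hδT n) hα hy hx₀ hseg hs, ?_⟩
  have hTδ : T - δ n ≠ 0 := (sub_pos.2 (hδT n)).ne'
  rw [integral_norm_sq_concatRescaled hc hδn (hδT n) hα]
  exact le_of_eq (by field_simp; ring)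

/-- Trajectory approximation from a nearby initial point on the same edge:
the rescaled-concatenated trajectories `(yₙ, αₙ)` are admissible from `xₙ`,
end at `y(T)`, stay `δₙ + ‖α‖₂√δₙ`-close to `y`, and have almost the same energy. -/
theorem stmt_10 {d N : ℕ} (T : ℝ) (hT : 0 < T)
    (e : Fin (N + 1) → EuclideanSpace ℝ (Fin d))
    (he : ∀ i, ‖e i‖ = 1) (hinj : Function.Injective e)
    (J : Fin (N + 1) → Set (EuclideanSpace ℝ (Fin d)))
    (hJ : ∀ i, J i = {p | ∃ r : ℝ, 0 ≤ r ∧ p = r • e i})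
    (G : Set (EuclideanSpace ℝ (Fin d)))
    (hG : G = ⋃ i, J i)
    -- geodesic distance
    (D : EuclideanSpace ℝ (Fin d) → EuclideanSpace ℝ (Fin d) → ℝ)
    (hDsame : ∀ x ∈ G, ∀ y ∈ G, (∃ i, x ∈ J i ∧ y ∈ J i) → D x y = ‖x - y‖)
    (hDdiff : ∀ x ∈ G, ∀ y ∈ G, (¬ ∃ i, x ∈ J i ∧ y ∈ J i) → D x y = ‖x‖ + ‖y‖)
    -- initial points on the first edge
    (a : ℝ) (b : ℕ → ℝ) (ha : 0 ≤ a) (hb : ∀ n, 0 ≤ b n)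
    (x : EuclideanSpace ℝ (Fin d)) (hx : x = a • e 0)
    (xn : ℕ → EuclideanSpace ℝ (Fin d)) (hxn : ∀ n, xn n = b n • e 0)
    (δ : ℕ → ℝ) (hδ : ∀ n, δ n = |b n - a|) (hδT : ∀ n, δ n < T)
    (hδ0 : Filter.Tendsto δ Filter.atTop (nhds 0))
    -- the reference admissible trajectory from `x`
    (y α : ℝ → EuclideanSpace ℝ (Fin d))
    (hα : MemLp α 2 (volume.restrict (Icc (0 : ℝ) T)))
    (hy : ∀ s ∈ Icc (0 : ℝ) T, (y s = x + ∫ τ in (0 : ℝ)..s, α τ) ∧ y s ∈ G)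
    -- the approximating controls and curves
    (αn : ℕ → ℝ → EuclideanSpace ℝ (Fin d))
    (hαn : ∀ n s, αn n s =
      if s ≤ δ n then (if b n ≤ a then e 0 else -e 0)
      else (T / (T - δ n)) • α ((s - δ n) * (T / (T - δ n))))
    (yn : ℕ → ℝ → EuclideanSpace ℝ (Fin d))
    (hyn : ∀ n s, yn n s = xn n + ∫ τ in (0 : ℝ)..s, αn n τ) :
    ∀ n,
      (MemLp (αn n) 2 (volume.restrict (Icc (0 : ℝ) T)) ∧
        ∀ s ∈ Icc (0 : ℝ) T, yn n s ∈ G) ∧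
      yn n T = y T ∧
      (∀ s ∈ Icc (0 : ℝ) T, D (yn n s) (y s) ≤
        δ n + Real.sqrt (∫ τ in (0 : ℝ)..T, ‖α τ‖ ^ 2) * Real.sqrt (δ n)) ∧
      (∫ τ in (0 : ℝ)..T, ‖αn n τ‖ ^ 2) ≤
        (∫ τ in (0 : ℝ)..T, ‖α τ‖ ^ 2) +
          δ n * (1 + (∫ τ in (0 : ℝ)..T, ‖α τ‖ ^ 2) / (T - δ n)) :=
  stmt_10_general T hT e he hinj J hJ G hG D hDsame hDdiff a b ha hb x hx xn hxn δ hδ hδT y α hα hy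
    αn hαn yn hyn
end

section
/- Dynamic programming principle on a junction: for every (x,t) ∈ 𝒢 × [0,T] and t̄ ∈ [t,T], u(x,t) = inf over admissible trajectories (y,α) on [t,t̄] starting from x of { u(y(t̄), t̄) + ∫_t^{t̄} [ L(y(τ),τ) + |α(τ)|²/2 ] dτ }. -/
open Set MeasureTheory

/-!
Restricting an admissible trajectory from `(x, t)` to `[t̄, T]` gives one from `(y t̄, t̄)`, so the
cost of every trajectory is at least its running cost on `[t, t̄]` plus `u (y t̄) t̄`. Conversely,
following any trajectory on `[t, t̄]` and then an `ε`-optimal one from `(y t̄, t̄)` is admissible,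
which gives the reverse inequality. The measure-theoretic input is that the junction cost `L` is
bounded and, along a continuous path, agrees with a continuous function on the closed set of times
spent at the vertex and on each of the relatively open sets of times spent inside an edge, hence
is integrable along admissible trajectories.
-/

lemma MeasureTheory.IntegrableOn.intervalIntegrable_of_mem {F : Type*} [NormedAddCommGroup F]
    {f : ℝ → F} {a b a' b' : ℝ} (hf : IntegrableOn f (Icc a b)) (ha' : a' ∈ Icc a b)
    (hb' : b' ∈ Icc a b) :
    IntervalIntegrable f volume a' b' :=
  (hf.mono_set (uIcc_subset_Icc ha' hb')).intervalIntegrable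

section concatAt

variable {E : Type*}

noncomputable def concatAt (tb : ℝ) (q p : (ℝ → E) × (ℝ → E)) : (ℝ → E) × (ℝ → E) :=
  ((Iic tb).piecewise q.1 p.1, (Iic tb).piecewise q.2 p.2)

variable {tb s : ℝ} {q p : (ℝ → E) × (ℝ → E)}

lemma concatAt_fst_of_le (hs : s ≤ tb) : (concatAt tb q p).1 s = q.1 s :=
  piecewise_eq_of_mem (Iic tb) q.1 p.1 hs

lemma concatAt_snd_of_le (hs : s ≤ tb) : (concatAt tb q p).2 s = q.2 s :=
  piecewise_eq_of_mem (Iic tb) q.2 p.2 hs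

lemma concatAt_fst_of_lt (hs : tb < s) : (concatAt tb q p).1 s = p.1 s :=
  piecewise_eq_of_notMem (Iic tb) q.1 p.1 (not_le.2 hs)

lemma concatAt_snd_of_lt (hs : tb < s) : (concatAt tb q p).2 s = p.2 s :=
  piecewise_eq_of_notMem (Iic tb) q.2 p.2 (not_le.2 hs)

lemma memLp_concatAt_snd [NormedAddCommGroup E] {r : ENNReal} {t t' : ℝ}
    (hq : MemLp q.2 r (volume.restrict (Icc t tb)))
    (hp : MemLp p.2 r (volume.restrict (Icc tb t'))) :
    MemLp (concatAt tb q p).2 r (volume.restrict (Icc t t')) := by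
  refine MemLp.piecewise measurableSet_Iic ?_ ?_ <;>
    rw [Measure.restrict_restrict (by measurability)]
  · exact hq.mono_measure (Measure.restrict_mono
      (show Iic tb ∩ Icc t t' ⊆ Icc t tb from fun τ hτ => ⟨hτ.2.1, hτ.1⟩) le_rfl)
  · exact hp.mono_measure (Measure.restrict_mono
      (show (Iic tb)ᶜ ∩ Icc t t' ⊆ Icc tb t' from fun τ hτ => ⟨le_of_not_ge hτ.1, hτ.2.2⟩) le_rfl)

end concatAt

section OptimalControl

variable {E : Type*} [NormedAddCommGroup E] [NormedSpace ℝ E]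

structure IsAdmissible (G : Set E) (t t' : ℝ) (x : E) (p : (ℝ → E) × (ℝ → E)) : Prop where
  memLp : MemLp p.2 2 (volume.restrict (Icc t t'))
  eq_add_integral : ∀ s ∈ Icc t t', p.1 s = x + ∫ τ in t..s, p.2 τ
  mapsTo : MapsTo p.1 (Icc t t') G

lemma isAdmissible_iff {G : Set E} {t t' : ℝ} {x : E} {p : (ℝ → E) × (ℝ → E)} :
    IsAdmissible G t t' x p ↔ MemLp p.2 2 (volume.restrict (Icc t t')) ∧
      ∀ s ∈ Icc t t', (p.1 s = x + ∫ τ in t..s, p.2 τ) ∧ p.1 s ∈ G :=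
  ⟨fun h => ⟨h.memLp, fun s hs => ⟨h.eq_add_integral s hs, h.mapsTo hs⟩⟩,
    fun h => ⟨h.1, fun s hs => (h.2 s hs).1, fun s hs => (h.2 s hs).2⟩⟩

noncomputable def runningCost (L : E → ℝ → ℝ) (t t' : ℝ) (p : (ℝ → E) × (ℝ → E)) : ℝ :=
  ∫ τ in t..t', (L (p.1 τ) τ + ‖p.2 τ‖ ^ 2 / 2)

noncomputable def valueFunction (G : Set E) (L : E → ℝ → ℝ) (g : E → ℝ) (T : ℝ) (x : E)
    (t : ℝ) : ℝ :=
  sInf ((fun p => runningCost L t T p + g (p.1 T)) '' {p | IsAdmissible G t T x p})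

structure IsRunningCost (G : Set E) (L : E → ℝ → ℝ) : Prop where
  bounded : ∃ M, ∀ z ∈ G, ∀ τ, |L z τ| ≤ M
  aestronglyMeasurable_comp : ∀ ⦃a b : ℝ⦄ ⦃Z : ℝ → E⦄, ContinuousOn Z (Icc a b) →
    MapsTo Z (Icc a b) G → AEStronglyMeasurable (fun τ => L (Z τ) τ) (volume.restrict (Icc a b))

namespace IsAdmissible

variable {G : Set E} {t t' tb : ℝ} {x : E} {p q : (ℝ → E) × (ℝ → E)}

lemma integrableOn (hp : IsAdmissible G t t' x p) : IntegrableOn p.2 (Icc t t') :=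
  hp.memLp.integrable one_le_two

lemma fst_left (hp : IsAdmissible G t t' x p) (htt' : t ≤ t') : p.1 t = x := by
  simpa using hp.eq_add_integral t ⟨le_rfl, htt'⟩

lemma continuousOn (hp : IsAdmissible G t t' x p) (htt' : t ≤ t') :
    ContinuousOn p.1 (Icc t t') := by
  have hprim := intervalIntegral.continuousOn_primitive_interval (a := t) (b := t')
    (by rw [uIcc_of_le htt']; exact hp.integrableOn)
  rw [uIcc_of_le htt'] at hprim
  exact (continuousOn_const.add hprim).congr hp.eq_add_integral

lemma const (hx : x ∈ G) : IsAdmissible G t t' x ((fun _ => x), (fun _ => 0)) :=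
  ⟨MemLp.zero', fun _ _ => by simp, fun _ _ => hx⟩

lemma mono_right (hp : IsAdmissible G t t' x p) (htb : tb ≤ t') : IsAdmissible G t tb x p :=
  ⟨hp.memLp.mono_measure (Measure.restrict_mono (Icc_subset_Icc le_rfl htb) le_rfl),
    fun s hs => hp.eq_add_integral s ⟨hs.1, hs.2.trans htb⟩,
    hp.mapsTo.mono_left (Icc_subset_Icc le_rfl htb)⟩

lemma restrict_left (hp : IsAdmissible G t t' x p) (htb : tb ∈ Icc t t') :
    IsAdmissible G tb t' (p.1 tb) p := by
  refine ⟨hp.memLp.mono_measure (Measure.restrict_mono (Icc_subset_Icc htb.1 le_rfl) le_rfl),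
    fun s hs => ?_, hp.mapsTo.mono_left (Icc_subset_Icc htb.1 le_rfl)⟩
  have hs' : s ∈ Icc t t' := ⟨htb.1.trans hs.1, hs.2⟩
  rw [hp.eq_add_integral s hs', hp.eq_add_integral tb htb, add_assoc,
    intervalIntegral.integral_add_adjacent_intervals
      (hp.integrableOn.intervalIntegrable_of_mem (left_mem_Icc.2 (htb.1.trans htb.2)) htb)
      (hp.integrableOn.intervalIntegrable_of_mem htb hs')]

lemma concatAt_fst (hp : IsAdmissible G tb t' (q.1 tb) p) {s : ℝ} (hs : s ∈ Icc tb t') :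
    (concatAt tb q p).1 s = p.1 s := by
  rcases hs.1.eq_or_lt with rfl | hlt
  · rw [concatAt_fst_of_le le_rfl, hp.fst_left hs.2]
  · exact concatAt_fst_of_lt hlt

lemma concat (hq : IsAdmissible G t tb x q) (hp : IsAdmissible G tb t' (q.1 tb) p)
    (htb : tb ∈ Icc t t') : IsAdmissible G t t' x (concatAt tb q p) := by
  have hmem := memLp_concatAt_snd hq.memLp hp.memLp
  have hint : IntegrableOn (concatAt tb q p).2 (Icc t t') := hmem.integrable one_le_two
  refine ⟨hmem, fun s hs => ?_, fun s hs => ?_⟩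
  · rcases le_total s tb with hstb | htbs
    · rw [concatAt_fst_of_le hstb, hq.eq_add_integral s ⟨hs.1, hstb⟩]
      congr 1
      refine intervalIntegral.integral_congr fun τ hτ => ?_
      rw [uIcc_of_le hs.1] at hτ
      exact (concatAt_snd_of_le (hτ.2.trans hstb)).symm
    · rw [hp.concatAt_fst ⟨htbs, hs.2⟩, hp.eq_add_integral s ⟨htbs, hs.2⟩,
        hq.eq_add_integral tb ⟨htb.1, le_rfl⟩, add_assoc,
        ← intervalIntegral.integral_add_adjacent_intervals
          (hint.intervalIntegrable_of_mem (left_mem_Icc.2 (htb.1.trans htb.2)) htb)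
          (hint.intervalIntegrable_of_mem htb hs)]
      congr 2
      · refine intervalIntegral.integral_congr fun τ hτ => ?_
        rw [uIcc_of_le htb.1] at hτ
        exact (concatAt_snd_of_le hτ.2).symm
      · exact intervalIntegral.integral_congr_Ioo_of_le htbs fun τ hτ =>
          (concatAt_snd_of_lt hτ.1).symm
  · rcases le_total s tb with hstb | htbs
    · rw [concatAt_fst_of_le hstb]
      exact hq.mapsTo ⟨hs.1, hstb⟩
    · rw [hp.concatAt_fst ⟨htbs, hs.2⟩]
      exact hp.mapsTo ⟨htbs, hs.2⟩

end IsAdmissible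

lemma nonempty_setOf_isAdmissible {G : Set E} {t t' : ℝ} {x : E} (hx : x ∈ G) :
    {p | IsAdmissible G t t' x p}.Nonempty :=
  ⟨_, IsAdmissible.const hx⟩

namespace IsRunningCost

variable {G : Set E} {L : E → ℝ → ℝ} {g : E → ℝ} {t t' tb T : ℝ} {x : E}
  {p q : (ℝ → E) × (ℝ → E)}

lemma integrableOn (hL : IsRunningCost G L) (hp : IsAdmissible G t t' x p) (htt' : t ≤ t') :
    IntegrableOn (fun τ => L (p.1 τ) τ + ‖p.2 τ‖ ^ 2 / 2) (Icc t t') := by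
  obtain ⟨M, hM⟩ := hL.bounded
  have hLp : IntegrableOn (fun τ => L (p.1 τ) τ) (Icc t t') :=
    Integrable.mono' (integrableOn_const (C := M) measure_Icc_lt_top.ne)
      (hL.aestronglyMeasurable_comp (hp.continuousOn htt') hp.mapsTo)
      (ae_restrict_of_forall_mem measurableSet_Icc fun τ hτ => hM _ (hp.mapsTo hτ) τ)
  exact hLp.add (((memLp_two_iff_integrable_sq_norm hp.memLp.1).1 hp.memLp).div_const 2)

lemma runningCost_add (hL : IsRunningCost G L) (hp : IsAdmissible G t t' x p)
    (htb : tb ∈ Icc t t') :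
    runningCost L t t' p = runningCost L t tb p + runningCost L tb t' p := by
  have hint := hL.integrableOn hp (htb.1.trans htb.2)
  exact (intervalIntegral.integral_add_adjacent_intervals
    (hint.intervalIntegrable_of_mem (left_mem_Icc.2 (htb.1.trans htb.2)) htb)
    (hint.intervalIntegrable_of_mem htb (right_mem_Icc.2 (htb.1.trans htb.2)))).symm

lemma runningCost_concatAt (hL : IsRunningCost G L) (hq : IsAdmissible G t tb x q)
    (hp : IsAdmissible G tb t' (q.1 tb) p) (htb : tb ∈ Icc t t') :
    runningCost L t t' (concatAt tb q p) = runningCost L t tb q + runningCost L tb t' p := by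
  rw [hL.runningCost_add (hq.concat hp htb) htb]
  congr 1
  · refine intervalIntegral.integral_congr fun τ hτ => ?_
    rw [uIcc_of_le htb.1] at hτ
    simp only [concatAt_fst_of_le hτ.2, concatAt_snd_of_le hτ.2]
  · exact intervalIntegral.integral_congr_Ioo_of_le htb.2 fun τ hτ => by
      simp only [concatAt_fst_of_lt hτ.1, concatAt_snd_of_lt hτ.1]

lemma exists_le_runningCost (hL : IsRunningCost G L) (htt' : t ≤ t') :
    ∃ C, ∀ x p, IsAdmissible G t t' x p → C ≤ runningCost L t t' p := by
  obtain ⟨M, hM⟩ := hL.bounded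
  refine ⟨(t' - t) * -M, fun x p hp => ?_⟩
  have hmono := intervalIntegral.integral_mono_on htt' intervalIntegrable_const
    ((hL.integrableOn hp htt').intervalIntegrable_of_mem (left_mem_Icc.2 htt')
      (right_mem_Icc.2 htt')) fun τ hτ => by
    have hLτ := (abs_le.1 (hM _ (hp.mapsTo hτ) τ)).1
    have hsq : 0 ≤ ‖p.2 τ‖ ^ 2 / 2 := by positivity
    exact (add_le_add hLτ hsq).trans_eq' (add_zero _).symm
  simpa [runningCost] using hmono

lemma exists_le_cost (hL : IsRunningCost G L) (hg : BddBelow (g '' G)) (htT : t ≤ T) :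
    ∃ C, ∀ x p, IsAdmissible G t T x p → C ≤ runningCost L t T p + g (p.1 T) := by
  obtain ⟨C, hC⟩ := hL.exists_le_runningCost htT
  obtain ⟨Cg, hCg⟩ := hg
  exact ⟨C + Cg, fun x p hp =>
    add_le_add (hC x p hp) (hCg ⟨_, hp.mapsTo (right_mem_Icc.2 htT), rfl⟩)⟩

lemma valueFunction_le (hL : IsRunningCost G L) (hg : BddBelow (g '' G))
    (hp : IsAdmissible G t T x p) (htT : t ≤ T) :
    valueFunction G L g T x t ≤ runningCost L t T p + g (p.1 T) := by
  obtain ⟨C, hC⟩ := hL.exists_le_cost hg htT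
  exact csInf_le ⟨C, by rintro _ ⟨p, hp, rfl⟩; exact hC x p hp⟩ ⟨p, hp, rfl⟩

lemma exists_le_valueFunction (hL : IsRunningCost G L) (hg : BddBelow (g '' G))
    (htT : t ≤ T) : ∃ C, ∀ x ∈ G, C ≤ valueFunction G L g T x t := by
  obtain ⟨C, hC⟩ := hL.exists_le_cost hg htT
  refine ⟨C, fun x hx => le_csInf ((nonempty_setOf_isAdmissible hx).image _) ?_⟩
  rintro _ ⟨p, hp, rfl⟩
  exact hC x p hp

lemma valueFunction_le_valueFunction_add_runningCost (hL : IsRunningCost G L)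
    (hg : BddBelow (g '' G)) (hq : IsAdmissible G t tb x q) (htb : tb ∈ Icc t T) :
    valueFunction G L g T x t ≤ valueFunction G L g T (q.1 tb) tb + runningCost L t tb q := by
  refine le_of_forall_pos_le_add fun ε hε => ?_
  obtain ⟨_, ⟨p, hp, rfl⟩, hpε⟩ := Real.lt_sInf_add_pos
    ((nonempty_setOf_isAdmissible (hq.mapsTo (right_mem_Icc.2 htb.1))).image _) hε
  have hpε : runningCost L tb T p + g (p.1 T) < valueFunction G L g T (q.1 tb) tb + ε := hpε
  calc valueFunction G L g T x t
      ≤ runningCost L t T (concatAt tb q p) + g ((concatAt tb q p).1 T) :=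
        hL.valueFunction_le hg (hq.concat hp htb) (htb.1.trans htb.2)
    _ = runningCost L t tb q + (runningCost L tb T p + g (p.1 T)) := by
        rw [hL.runningCost_concatAt hq hp htb, hp.concatAt_fst (right_mem_Icc.2 htb.2), add_assoc]
    _ ≤ valueFunction G L g T (q.1 tb) tb + runningCost L t tb q + ε := by linarith

theorem valueFunction_eq_sInf (hL : IsRunningCost G L) (hg : BddBelow (g '' G)) (hx : x ∈ G)
    (htb : tb ∈ Icc t T) :
    valueFunction G L g T x t = sInf ((fun p => valueFunction G L g T (p.1 tb) tb +
      runningCost L t tb p) '' {p | IsAdmissible G t tb x p}) := by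
  obtain ⟨C, hC⟩ := hL.exists_le_valueFunction hg htb.2
  obtain ⟨C', hC'⟩ := hL.exists_le_runningCost htb.1
  have hbdd : BddBelow ((fun p => valueFunction G L g T (p.1 tb) tb +
      runningCost L t tb p) '' {p | IsAdmissible G t tb x p}) := by
    refine ⟨C + C', ?_⟩
    rintro _ ⟨q, hq, rfl⟩
    exact add_le_add (hC _ (hq.mapsTo (right_mem_Icc.2 htb.1))) (hC' x q hq)
  refine le_antisymm (le_csInf ((nonempty_setOf_isAdmissible hx).image _) ?_)
    (le_csInf ((nonempty_setOf_isAdmissible hx).image _) ?_)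
  · rintro _ ⟨q, hq, rfl⟩
    exact hL.valueFunction_le_valueFunction_add_runningCost hg hq htb
  · rintro _ ⟨p, hp, rfl⟩
    calc _ ≤ valueFunction G L g T (p.1 tb) tb + runningCost L t tb p :=
          csInf_le hbdd ⟨p, hp.mono_right htb.2, rfl⟩
      _ ≤ runningCost L tb T p + g (p.1 T) + runningCost L t tb p :=
          add_le_add_left (hL.valueFunction_le hg (hp.restrict_left htb) htb.2) _
      _ = runningCost L t T p + g (p.1 T) := by
          rw [hL.runningCost_add hp htb]
          ring

end IsRunningCost

end OptimalControl

lemma abs_le_of_eq_on_rays {E ι : Type*} [Zero E] [Fintype ι] [Nonempty ι] (J : ι → Set E)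
    (F : E → ℝ) (f : ι → E → ℝ) {c M : ℝ} (hF : ∀ i, ∀ x ∈ J i \ {0}, F x = f i x)
    (hF0 : F 0 = min c (Finset.univ.inf' Finset.univ_nonempty fun i => f i 0))
    (hf : ∀ i x, |f i x| ≤ M) (hc : |c| ≤ M) {z : E} (hz : z ∈ ⋃ i, J i) :
    |F z| ≤ M := by
  by_cases h0 : z = 0
  · subst h0
    rw [hF0, abs_le]
    exact ⟨le_min (abs_le.1 hc).1 (Finset.le_inf' _ _ fun i _ => (abs_le.1 (hf i 0)).1),
      (min_le_left _ _).trans (abs_le.1 hc).2⟩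
  · obtain ⟨i, hi⟩ := mem_iUnion.1 hz
    rw [hF i z ⟨hi, h0⟩]
    exact hf i z

lemma isClosed_setOf_nonneg_smul {E : Type*} [NormedAddCommGroup E] [NormedSpace ℝ E] {e : E}
    (he : ‖e‖ = 1) :
    IsClosed {p : E | ∃ r : ℝ, 0 ≤ r ∧ p = r • e} := by
  have h : {p : E | ∃ r : ℝ, 0 ≤ r ∧ p = r • e} = {p : E | p = ‖p‖ • e} := by
    ext p
    constructor
    · rintro ⟨r, hr, rfl⟩
      simp [norm_smul, abs_of_nonneg hr, he]
    · exact fun h => ⟨‖p‖, norm_nonneg p, h⟩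
  rw [h]
  exact isClosed_eq continuous_id (continuous_norm.smul continuous_const)

lemma aestronglyMeasurable_comp_of_eq_on_rays {E ι : Type*} [TopologicalSpace E] [Zero E]
    [T1Space E] [Countable ι] (J : ι → Set E)
    (hJ : ∀ i, IsClosed (J i)) (L : E → ℝ → ℝ) (ℓ : ι → E → ℝ → ℝ)
    (hℓ : ∀ i, Continuous fun p : E × ℝ => ℓ i p.1 p.2)
    (hL : ∀ i, ∀ x ∈ J i \ {0}, ∀ t, L x t = ℓ i x t) (hL0 : Continuous (L 0))
    {Z : ℝ → E} {a b : ℝ} (hZ : ContinuousOn Z (Icc a b))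
    (hZJ : MapsTo Z (Icc a b) (⋃ i, J i)) :
    AEStronglyMeasurable (fun τ => L (Z τ) τ) (volume.restrict (Icc a b)) := by
  set Z0 := Icc a b ∩ Z ⁻¹' {0}
  have hZ0 : MeasurableSet Z0 :=
    (hZ.preimage_isClosed_of_isClosed isClosed_Icc isClosed_singleton).measurableSet
  set S : ι → Set ℝ := fun i => (Icc a b ∩ Z ⁻¹' J i) \ Z0
  have hS : ∀ i, MeasurableSet (S i) := fun i =>
    (hZ.preimage_isClosed_of_isClosed isClosed_Icc (hJ i)).measurableSet.diff hZ0
  have hcover : Icc a b ⊆ Z0 ∪ ⋃ i, S i := by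
    intro τ hτ
    by_cases h0 : Z τ = 0
    · exact Or.inl ⟨hτ, h0⟩
    · obtain ⟨i, hi⟩ := mem_iUnion.1 (hZJ hτ)
      exact Or.inr (mem_iUnion.2 ⟨i, ⟨hτ, hi⟩, fun h => h0 h.2⟩)
  refine AEStronglyMeasurable.mono_measure ?_ (Measure.restrict_mono hcover le_rfl)
  rw [aestronglyMeasurable_union_iff, aestronglyMeasurable_iUnion_iff]
  refine ⟨hL0.aestronglyMeasurable.congr (ae_restrict_of_forall_mem hZ0 fun τ hτ => ?_),
    fun i => ?_⟩
  · exact congrArg (L · τ) (hτ.2 : Z τ = 0).symm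
  · have hℓZ : ContinuousOn (fun τ => ℓ i (Z τ) τ) (Icc a b) :=
      (hℓ i).comp_continuousOn (hZ.prodMk continuousOn_id)
    refine ((hℓZ.aestronglyMeasurable measurableSet_Icc).mono_measure
      (Measure.restrict_mono (fun τ hτ => hτ.1.1) le_rfl)).congr
      (ae_restrict_of_forall_mem (hS i) fun τ hτ => ?_)
    exact (hL i _ ⟨hτ.1.2, fun h => hτ.2 ⟨hτ.1.1, h⟩⟩ τ).symm

lemma isRunningCost_of_eq_on_rays {E ι : Type*} [NormedAddCommGroup E] [NormedSpace ℝ E]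
    [Fintype ι] [Nonempty ι] (J : ι → Set E) (hJ : ∀ i, IsClosed (J i)) (L : E → ℝ → ℝ)
    (ℓ : ι → E → ℝ → ℝ) (ℓs : ℝ → ℝ) (hℓ : ∀ i, Continuous fun p : E × ℝ => ℓ i p.1 p.2)
    (hℓs : Continuous ℓs) {Mℓ Mℓs : ℝ} (hMℓ : ∀ i x t, |ℓ i x t| ≤ Mℓ) (hMℓs : ∀ t, |ℓs t| ≤ Mℓs)
    (hL : ∀ i, ∀ x ∈ J i \ {0}, ∀ t, L x t = ℓ i x t)
    (hL0 : ∀ t, L 0 t = min (ℓs t) (Finset.univ.inf' Finset.univ_nonempty fun i => ℓ i 0 t)) :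
    IsRunningCost (⋃ i, J i) L := by
  have hL0_cont : Continuous (L 0) := by
    rw [show L 0 = _ from funext hL0]
    exact hℓs.min (Continuous.finset_inf'_apply _ fun i _ =>
      (hℓ i).comp (continuous_const.prodMk continuous_id))
  refine ⟨⟨max Mℓ Mℓs, fun z hz t => abs_le_of_eq_on_rays J (L · t) (ℓ · · t)
    (fun i x hx => hL i x hx t) (hL0 t) (fun i x => (hMℓ i x t).trans (le_max_left _ _))
    ((hMℓs t).trans (le_max_right _ _)) hz⟩, fun a b Z hZ hZJ => ?_⟩
  exact aestronglyMeasurable_comp_of_eq_on_rays J hJ L ℓ hℓ hL hL0_cont hZ hZJ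

theorem stmt_11_general {d N : ℕ} (T : ℝ)
    (e : Fin (N + 1) → EuclideanSpace ℝ (Fin d))
    (he : ∀ i, ‖e i‖ = 1)
    (J : Fin (N + 1) → Set (EuclideanSpace ℝ (Fin d)))
    (hJ : ∀ i, J i = {p | ∃ r : ℝ, 0 ≤ r ∧ p = r • e i})
    (G : Set (EuclideanSpace ℝ (Fin d)))
    (hG : G = ⋃ i, J i)
    -- running costs on the edges, at the vertex, and terminal costs
    (ℓ : Fin (N + 1) → EuclideanSpace ℝ (Fin d) → ℝ → ℝ) (ℓs : ℝ → ℝ)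
    (g : Fin (N + 1) → EuclideanSpace ℝ (Fin d) → ℝ) (gs : ℝ)
    (hℓcont : ∀ i, Continuous fun p : EuclideanSpace ℝ (Fin d) × ℝ => ℓ i p.1 p.2)
    (hℓscont : Continuous ℓs)
    (hℓbd : ∃ M, ∀ i x t, |ℓ i x t| ≤ M)
    (hℓsbd : ∃ M, ∀ t, |ℓs t| ≤ M)
    (hgbd : ∃ M, ∀ i x, |g i x| ≤ M)
    -- the aggregated running cost `L` and terminal cost `gT`
    (L : EuclideanSpace ℝ (Fin d) → ℝ → ℝ)
    (hL : ∀ i, ∀ x ∈ J i \ {0}, ∀ t, L x t = ℓ i x t)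
    (hLO : ∀ t, L 0 t =
      min (ℓs t) (Finset.univ.inf' Finset.univ_nonempty fun i => ℓ i 0 t))
    (gT : EuclideanSpace ℝ (Fin d) → ℝ)
    (hgT : ∀ i, ∀ x ∈ J i \ {0}, gT x = g i x)
    (hgTO : gT 0 = min gs (Finset.univ.inf' Finset.univ_nonempty fun i => g i 0))
    -- admissible trajectories starting from `x` at time `t`
    (Γ : ℝ → EuclideanSpace ℝ (Fin d) →
      Set ((ℝ → EuclideanSpace ℝ (Fin d)) × (ℝ → EuclideanSpace ℝ (Fin d))))
    (hΓ : ∀ t x, Γ t x = {p | MemLp p.2 2 (volume.restrict (Icc t T)) ∧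
        ∀ s ∈ Icc t T, (p.1 s = x + ∫ τ in t..s, p.2 τ) ∧ p.1 s ∈ G})
    -- the cost functional and the value function
    (Jc : ℝ → EuclideanSpace ℝ (Fin d) →
      ((ℝ → EuclideanSpace ℝ (Fin d)) × (ℝ → EuclideanSpace ℝ (Fin d))) → ℝ)
    (hJc : ∀ t x p, Jc t x p =
      (∫ τ in t..T, (L (p.1 τ) τ + ‖p.2 τ‖ ^ 2 / 2)) + gT (p.1 T))
    (u : EuclideanSpace ℝ (Fin d) → ℝ → ℝ)
    (hu : ∀ x t, u x t = sInf (Jc t x '' Γ t x))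
    -- admissible trajectories on the sub-interval `[t, t̄]` starting from `x`
    (Γseg : ℝ → ℝ → EuclideanSpace ℝ (Fin d) →
      Set ((ℝ → EuclideanSpace ℝ (Fin d)) × (ℝ → EuclideanSpace ℝ (Fin d))))
    (hΓseg : ∀ t tb x, Γseg t tb x = {p | MemLp p.2 2 (volume.restrict (Icc t tb)) ∧
        ∀ s ∈ Icc t tb, (p.1 s = x + ∫ τ in t..s, p.2 τ) ∧ p.1 s ∈ G}) :
    ∀ x ∈ G, ∀ t ∈ Icc (0 : ℝ) T, ∀ tb ∈ Icc t T,
      u x t = sInf ((fun p : (ℝ → EuclideanSpace ℝ (Fin d)) × (ℝ → EuclideanSpace ℝ (Fin d)) =>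
        u (p.1 tb) tb + ∫ τ in t..tb, (L (p.1 τ) τ + ‖p.2 τ‖ ^ 2 / 2)) '' Γseg t tb x) := by
  obtain ⟨Mℓ, hMℓ⟩ := hℓbd
  obtain ⟨Mℓs, hMℓs⟩ := hℓsbd
  obtain ⟨Mg, hMg⟩ := hgbd
  have hLcost : IsRunningCost G L := hG ▸ isRunningCost_of_eq_on_rays J
    (fun i => hJ i ▸ isClosed_setOf_nonneg_smul (he i)) L ℓ ℓs hℓcont hℓscont hMℓ hMℓs hL hLO
  have hgT_bdd : BddBelow (gT '' G) := by
    refine ⟨-max Mg |gs|, ?_⟩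
    rintro _ ⟨z, hz, rfl⟩
    exact neg_le_of_abs_le (abs_le_of_eq_on_rays J gT g hgT hgTO
      (fun i x => (hMg i x).trans (le_max_left _ _)) (le_max_right _ _) (hG ▸ hz))
  have hu_eq : u = valueFunction G L gT T := by
    ext x t
    rw [hu, hΓ, show Jc t x = _ from funext (hJc t x)]
    simp only [← isAdmissible_iff]
    rfl
  intro x hx t _ tb htb
  rw [hu_eq, hΓseg]
  simp only [← isAdmissible_iff]
  exact IsRunningCost.valueFunction_eq_sInf hLcost hgT_bdd hx htb

/-- Dynamic programming principle on the junction. -/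
theorem stmt_11 {d N : ℕ} (T : ℝ) (hT : 0 < T)
    (e : Fin (N + 1) → EuclideanSpace ℝ (Fin d))
    (he : ∀ i, ‖e i‖ = 1) (hinj : Function.Injective e)
    (J : Fin (N + 1) → Set (EuclideanSpace ℝ (Fin d)))
    (hJ : ∀ i, J i = {p | ∃ r : ℝ, 0 ≤ r ∧ p = r • e i})
    (G : Set (EuclideanSpace ℝ (Fin d)))
    (hG : G = ⋃ i, J i)
    -- running costs on the edges, at the vertex, and terminal costs
    (ℓ : Fin (N + 1) → EuclideanSpace ℝ (Fin d) → ℝ → ℝ) (ℓs : ℝ → ℝ)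
    (g : Fin (N + 1) → EuclideanSpace ℝ (Fin d) → ℝ) (gs : ℝ)
    (hℓcont : ∀ i, Continuous fun p : EuclideanSpace ℝ (Fin d) × ℝ => ℓ i p.1 p.2)
    (hℓscont : Continuous ℓs)
    (hgcont : ∀ i, Continuous (g i))
    (hℓbd : ∃ M, ∀ i x t, |ℓ i x t| ≤ M)
    (hℓsbd : ∃ M, ∀ t, |ℓs t| ≤ M)
    (hgbd : ∃ M, ∀ i x, |g i x| ≤ M)
    -- the aggregated running cost `L` and terminal cost `gT`
    (L : EuclideanSpace ℝ (Fin d) → ℝ → ℝ)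
    (hL : ∀ i, ∀ x ∈ J i \ {0}, ∀ t, L x t = ℓ i x t)
    (hLO : ∀ t, L 0 t =
      min (ℓs t) (Finset.univ.inf' Finset.univ_nonempty fun i => ℓ i 0 t))
    (gT : EuclideanSpace ℝ (Fin d) → ℝ)
    (hgT : ∀ i, ∀ x ∈ J i \ {0}, gT x = g i x)
    (hgTO : gT 0 = min gs (Finset.univ.inf' Finset.univ_nonempty fun i => g i 0))
    -- admissible trajectories starting from `x` at time `t`
    (Γ : ℝ → EuclideanSpace ℝ (Fin d) →
      Set ((ℝ → EuclideanSpace ℝ (Fin d)) × (ℝ → EuclideanSpace ℝ (Fin d))))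
    (hΓ : ∀ t x, Γ t x = {p | MemLp p.2 2 (volume.restrict (Icc t T)) ∧
        ∀ s ∈ Icc t T, (p.1 s = x + ∫ τ in t..s, p.2 τ) ∧ p.1 s ∈ G})
    -- the cost functional and the value function
    (Jc : ℝ → EuclideanSpace ℝ (Fin d) →
      ((ℝ → EuclideanSpace ℝ (Fin d)) × (ℝ → EuclideanSpace ℝ (Fin d))) → ℝ)
    (hJc : ∀ t x p, Jc t x p =
      (∫ τ in t..T, (L (p.1 τ) τ + ‖p.2 τ‖ ^ 2 / 2)) + gT (p.1 T))
    (u : EuclideanSpace ℝ (Fin d) → ℝ → ℝ)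
    (hu : ∀ x t, u x t = sInf (Jc t x '' Γ t x))
    -- admissible trajectories on the sub-interval `[t, t̄]` starting from `x`
    (Γseg : ℝ → ℝ → EuclideanSpace ℝ (Fin d) →
      Set ((ℝ → EuclideanSpace ℝ (Fin d)) × (ℝ → EuclideanSpace ℝ (Fin d))))
    (hΓseg : ∀ t tb x, Γseg t tb x = {p | MemLp p.2 2 (volume.restrict (Icc t tb)) ∧
        ∀ s ∈ Icc t tb, (p.1 s = x + ∫ τ in t..s, p.2 τ) ∧ p.1 s ∈ G}) :
    ∀ x ∈ G, ∀ t ∈ Icc (0 : ℝ) T, ∀ tb ∈ Icc t T,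
      u x t = sInf ((fun p : (ℝ → EuclideanSpace ℝ (Fin d)) × (ℝ → EuclideanSpace ℝ (Fin d)) =>
        u (p.1 tb) tb + ∫ τ in t..tb, (L (p.1 τ) τ + ‖p.2 τ‖ ^ 2 / 2)) '' Γseg t tb x) :=
  stmt_11_general T e he J hJ G hG ℓ ℓs g gs hℓcont hℓscont hℓbd hℓsbd hgbd L hL hLO gT hgT hgTO Γ
    hΓ Jc hJc u hu Γseg hΓseg
end

section
/- In the two-edge example, optimal trajectories concentrate at the vertex: consider the junction with two edges J₁, J₂ and costs ℓ₁ ≡ −1 on J₁, ℓ₂ ≡ 1 on J₂, vertex cost ℓ_O ≡ −1, and zero terminal costs. Fix x̄ ∈ (0, 1/2] with x̄ ≤ 4T/5 and let (y,α) be an optimal trajectory starting from x̄ e₂ at time 0. Then: (a) once y reaches O it never leaves O (if t₀ = inf{t : y(t) = O} < T then y(t) = O for all t ≥ t₀); and (b) y reaches O before time t_{x̄} = 5x̄/4, i.e., t₀ ≤ 5x̄/4. -/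
/-!
The vertex `O = 0` minimises the state cost on the junction (`L ≥ -1 = L O`), so stopping an
optimal trajectory at the first time it reaches `O` costs no more than continuing; optimality
then forces `∫ |α|² = 0` on the remaining time, i.e. the trajectory stays at `O`.
If `O` were not reached before `t₁ = 5x̄/4`, the trajectory would stay on the second edge
`J 1 \ {0}` during `[0, t₁]` (the two closed edges meet only at `O`), where `L = 1`, so its cost
would be at least `t₁ - (T - t₁) = 5x̄/2 - T`. Going straight to `O` at speed `2` and stopping
there costs `(x̄/2)(1 + 2) - (T - x̄/2) = 2x̄ - T`, which is smaller.
-/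

open Set MeasureTheory

theorem intervalIntegral.integral_indicator_Iic {E : Type*} [NormedAddCommGroup E]
    [NormedSpace ℝ E] {f : ℝ → E} {a s t : ℝ} (hs : a ≤ s) (ht : a ≤ t) :
    ∫ τ in a..s, (Iic t).indicator f τ = ∫ τ in a..min s t, f τ := by
  rcases le_total s t with hst | hts
  · rw [min_eq_left hst]
    refine intervalIntegral.integral_congr fun τ hτ => indicator_of_mem ?_ f
    rw [uIcc_of_le hs] at hτ
    exact hτ.2.trans hst
  · rw [min_eq_right hts]
    exact intervalIntegral.integral_indicator ⟨ht, hts⟩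

theorem intervalIntegral.integral_eq_zero_of_integral_norm_sq_nonpos {E : Type*}
    [NormedAddCommGroup E] [NormedSpace ℝ E] {f : ℝ → E} {a b s : ℝ} (hab : a ≤ b)
    (hf : IntervalIntegrable (fun τ => ‖f τ‖ ^ 2) volume a b)
    (h : ∫ τ in a..b, ‖f τ‖ ^ 2 ≤ 0) (hs : s ∈ Icc a b) : ∫ τ in a..s, f τ = 0 := by
  have h0 : (fun τ => ‖f τ‖ ^ 2) =ᵐ[volume.restrict (Ioc a b)] 0 :=
    (intervalIntegral.integral_eq_zero_iff_of_le_of_nonneg_ae hab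
      (ae_of_all _ fun τ => by positivity) hf).1
      (le_antisymm h (intervalIntegral.integral_nonneg hab fun τ _ => by positivity))
  refine intervalIntegral.integral_zero_ae ?_
  filter_upwards [ae_imp_of_ae_restrict h0] with τ hτ hτs
  rw [uIoc_of_le hs.1] at hτs
  simpa using hτ ⟨hτs.1, hτs.2.trans hs.2⟩

theorem ContinuousOn.integrableOn_comp_of_eqOn {X : Type*} [TopologicalSpace X]
    [MeasurableSpace X] [BorelSpace X] {y : ℝ → X} {L g : X → ℝ} {a b M : ℝ}
    (hy : ContinuousOn y (Icc a b)) (hg : Measurable g) (hgM : ∀ p, |g p| ≤ M)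
    (hLg : ∀ τ ∈ Icc a b, L (y τ) = g (y τ)) : IntegrableOn (fun τ => L (y τ)) (Icc a b) := by
  have hmeas : AEStronglyMeasurable (fun τ => g (y τ)) (volume.restrict (Icc a b)) :=
    (hg.comp_aemeasurable (hy.aemeasurable measurableSet_Icc)).aestronglyMeasurable
  exact (Integrable.of_bound hmeas M (ae_of_all _ fun τ => hgM _)).congr
    ((ae_restrict_mem measurableSet_Icc).mono fun τ hτ => (hLg τ hτ).symm)

theorem IsPreconnected.subset_right_of_isClosed {X : Type*} [TopologicalSpace X]
    {s A B : Set X} (hs : IsPreconnected s) (hA : IsClosed A) (hB : IsClosed B)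
    (hsAB : s ⊆ A ∪ B) (hsB : (s ∩ B).Nonempty) (hAB : Disjoint s (A ∩ B)) : s ⊆ B := by
  intro p hp
  by_contra hpB
  obtain ⟨q, hqs, hqAB⟩ := isPreconnected_closed_iff.1 hs A B hA hB hsAB
    ⟨p, hp, (hsAB hp).resolve_right hpB⟩ hsB
  exact hAB.notMem_of_mem_left hqs hqAB

theorem isClosed_ray {E : Type*} [NormedAddCommGroup E] [NormedSpace ℝ E] (e : E) :
    IsClosed {p : E | ∃ r : ℝ, 0 ≤ r ∧ p = r • e} := by
  have : {p : E | ∃ r : ℝ, 0 ≤ r ∧ p = r • e} = (· • e) '' Ici (0 : ℝ) := by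
    ext p
    simp [eq_comm]
  rw [this]
  exact isClosedMap_smul_left e _ isClosed_Ici

theorem Set.iUnion_fin_two {X : Type*} (J : Fin 2 → Set X) : ⋃ i, J i = J 0 ∪ J 1 := by
  ext p
  simp [Fin.exists_fin_two]

section TwoEdgeCost

variable {X : Type*} [Zero X] {J₀ J₁ : Set X} {L : X → ℝ}

theorem inter_subset_zero_of_edgeCost (hL₀ : ∀ p ∈ J₀, L p = -1)
    (hL₁ : ∀ p ∈ J₁ \ {0}, L p = 1) : J₀ ∩ J₁ ⊆ {0} := fun p ⟨hp₀, hp₁⟩ =>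
  not_not.1 fun hp => by linarith [hL₀ p hp₀, hL₁ p ⟨hp₁, hp⟩]

theorem eq_indicator_sub_one_of_edgeCost (h0 : (0 : X) ∈ J₀) (hL₀ : ∀ p ∈ J₀, L p = -1)
    (hL₁ : ∀ p ∈ J₁ \ {0}, L p = 1) {p : X} (hp : p ∈ J₀ ∪ J₁) :
    L p = (J₁ \ {0}).indicator (fun _ => 2) p - 1 := by
  by_cases h₁ : p ∈ J₁ \ {0}
  · rw [hL₁ p h₁, indicator_of_mem h₁]
    norm_num
  rw [indicator_of_notMem h₁]
  rcases hp with hp | hp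
  · exact (hL₀ p hp).trans (by norm_num)
  · obtain rfl : p = 0 := not_not.1 fun hp' => h₁ ⟨hp, hp'⟩
    exact (hL₀ 0 h0).trans (by norm_num)

theorem isMinOn_zero_of_edgeCost (h0 : (0 : X) ∈ J₀) (hL₀ : ∀ p ∈ J₀, L p = -1)
    (hL₁ : ∀ p ∈ J₁ \ {0}, L p = 1) : IsMinOn L (J₀ ∪ J₁) 0 := fun p hp => by
  have := indicator_nonneg (s := J₁ \ {0}) (fun _ _ => zero_le_two (α := ℝ)) p
  show L 0 ≤ L p
  rw [eq_indicator_sub_one_of_edgeCost h0 hL₀ hL₁ hp, hL₀ 0 h0]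
  linarith

end TwoEdgeCost

noncomputable section ControlProblem

variable {E : Type*} [NormedAddCommGroup E] {L : E → ℝ} {T t : ℝ} {y α : ℝ → E}

def lagrangian (L : E → ℝ) (y α : ℝ → E) (τ : ℝ) : ℝ := L (y τ) + ‖α τ‖ ^ 2 / 2

def cost (L : E → ℝ) (T : ℝ) (y α : ℝ → E) : ℝ := ∫ τ in (0 : ℝ)..T, lagrangian L y α τ

theorem cost_eq_of_const_on_Ioo {p : E} (htT : t ≤ T)
    (hint : IntervalIntegrable (lagrangian L y α) volume 0 t)
    (hy : ∀ τ ∈ Ioo t T, y τ = p) (hα : ∀ τ ∈ Ioo t T, α τ = 0) :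
    cost L T y α = (∫ τ in (0 : ℝ)..t, lagrangian L y α τ) + (T - t) * L p := by
  have hrest : EqOn (lagrangian L y α) (fun _ => L p) (Ioo t T) := fun τ hτ => by
    simp [lagrangian, hy τ hτ, hα τ hτ]
  have hint' : IntervalIntegrable (lagrangian L y α) volume t T :=
    intervalIntegrable_const.congr_uIoo (uIoo_of_le htT ▸ hrest.symm)
  rw [cost, ← intervalIntegral.integral_add_adjacent_intervals hint hint',
    intervalIntegral.integral_congr_Ioo_of_le htT hrest, intervalIntegral.integral_const,
    smul_eq_mul]

variable [NormedSpace ℝ E] {G : Set E} {x : E}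

def IsAdmissible_s19 (G : Set E) (T : ℝ) (x : E) (y α : ℝ → E) : Prop :=
  MemLp α 2 (volume.restrict (Icc 0 T)) ∧
    ∀ s ∈ Icc (0 : ℝ) T, (y s = x + ∫ τ in (0 : ℝ)..s, α τ) ∧ y s ∈ G

def IsOptimal (G : Set E) (L : E → ℝ) (T : ℝ) (x : E) (y α : ℝ → E) : Prop :=
  IsAdmissible_s19 G T x y α ∧
    ∀ y' α', IsAdmissible_s19 G T x y' α' → cost L T y α ≤ cost L T y' α'

namespace IsAdmissible_s19

theorem integrableOn_s19 (h : IsAdmissible_s19 G T x y α) : IntegrableOn α (Icc 0 T) :=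
  h.1.integrable one_le_two

theorem integrableOn_norm_sq (h : IsAdmissible_s19 G T x y α) :
    IntegrableOn (fun τ => ‖α τ‖ ^ 2) (Icc 0 T) :=
  h.1.integrable_norm_pow two_ne_zero

theorem integrableOn_lagrangian (h : IsAdmissible_s19 G T x y α)
    (hLy : IntegrableOn (fun τ => L (y τ)) (Icc 0 T)) :
    IntegrableOn (lagrangian L y α) (Icc 0 T) :=
  hLy.add (h.integrableOn_norm_sq.div_const 2)

theorem continuousOn_s19 (h : IsAdmissible_s19 G T x y α) : ContinuousOn y (Icc 0 T) :=
  ((continuousOn_const (c := x)).add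
    (intervalIntegral.continuousOn_primitive h.integrableOn_s19)).congr fun s hs => by
      simp only [(h.2 s hs).1, intervalIntegral.integral_of_le hs.1, Pi.add_apply]

theorem apply_zero (h : IsAdmissible_s19 G T x y α) (hT : 0 ≤ T) : y 0 = x := by
  rw [(h.2 0 ⟨le_rfl, hT⟩).1, intervalIntegral.integral_same, add_zero]

theorem apply_eq_add_integral (h : IsAdmissible_s19 G T x y α) {s : ℝ} (ht : t ∈ Icc 0 T)
    (hs : s ∈ Icc 0 T) : y s = y t + ∫ τ in t..s, α τ := by
  have hint : ∀ u ∈ Icc 0 T, IntervalIntegrable α volume 0 u := fun u hu =>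
    (h.integrableOn_s19.mono_set (uIcc_subset_Icc ⟨le_rfl, hu.1.trans hu.2⟩ hu)).intervalIntegrable
  rw [(h.2 s hs).1, (h.2 t ht).1, add_assoc, intervalIntegral.integral_add_adjacent_intervals
    (hint t ht) ((hint s hs).symm.trans (hint t ht)).symm]

theorem stopAt (h : IsAdmissible_s19 G T x y α) (ht : t ∈ Icc 0 T) :
    IsAdmissible_s19 G T x (fun s => y (min s t)) ((Iic t).indicator α) := by
  refine ⟨h.1.indicator measurableSet_Iic, fun s hs => ?_⟩
  rw [intervalIntegral.integral_indicator_Iic hs.1 ht.1]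
  exact h.2 _ ⟨le_min hs.1 ht.1, (min_le_right s t).trans ht.2⟩

theorem cost_stopAt (h : IsAdmissible_s19 G T x y α)
    (hLy : IntegrableOn (fun τ => L (y τ)) (Icc 0 T)) (ht : t ∈ Icc 0 T) :
    cost L T (fun s => y (min s t)) ((Iic t).indicator α) =
      (∫ τ in (0 : ℝ)..t, lagrangian L y α τ) + (T - t) * L (y t) := by
  have heq : EqOn (lagrangian L (fun s => y (min s t)) ((Iic t).indicator α))
      (lagrangian L y α) (uIcc 0 t) := fun τ hτ => by
    rw [uIcc_of_le ht.1] at hτ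
    simp [lagrangian, min_eq_left hτ.2, indicator_of_mem (show τ ∈ Iic t from hτ.2)]
  have hint : IntervalIntegrable (lagrangian L y α) volume 0 t :=
    ((h.integrableOn_lagrangian hLy).mono_set
      (uIcc_subset_Icc ⟨le_rfl, ht.1.trans ht.2⟩ ht)).intervalIntegrable
  rw [cost_eq_of_const_on_Ioo (p := y t) ht.2
      (hint.congr fun τ hτ => (heq (uIoc_subset_uIcc hτ)).symm)
      (fun τ hτ => by simp only [min_eq_right hτ.1.le])
      (fun τ hτ => indicator_of_notMem (show τ ∉ Iic t from not_le.2 hτ.1) α),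
    intervalIntegral.integral_congr heq]

theorem le_cost (h : IsAdmissible_s19 G T x y α) (hLy : IntegrableOn (fun τ => L (y τ)) (Icc 0 T))
    (ht : t ∈ Icc 0 T) {M m : ℝ} (hM : ∀ τ ∈ Icc 0 t, M ≤ L (y τ))
    (hm : ∀ τ ∈ Icc t T, m ≤ L (y τ)) : M * t + m * (T - t) ≤ cost L T y α := by
  have hF := h.integrableOn_lagrangian hLy
  have hpiece : ∀ {a b c : ℝ}, a ∈ Icc 0 T → b ∈ Icc 0 T → a ≤ b →
      (∀ τ ∈ Icc a b, c ≤ L (y τ)) → c * (b - a) ≤ ∫ τ in a..b, lagrangian L y α τ := by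
    intro a b c ha hb hab hc
    have := intervalIntegral.integral_mono_on hab intervalIntegrable_const
      (hF.mono_set (uIcc_subset_Icc ha hb)).intervalIntegrable
      fun τ hτ => (hc τ hτ).trans (le_add_of_nonneg_right (by positivity))
    rwa [intervalIntegral.integral_const, smul_eq_mul, mul_comm] at this
  have h0 : (0 : ℝ) ∈ Icc 0 T := ⟨le_rfl, ht.1.trans ht.2⟩
  have hT : T ∈ Icc 0 T := ⟨h0.2, le_rfl⟩
  rw [cost, ← intervalIntegral.integral_add_adjacent_intervals
    (hF.mono_set (uIcc_subset_Icc h0 ht)).intervalIntegrable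
    (hF.mono_set (uIcc_subset_Icc ht hT)).intervalIntegrable]
  linarith [hpiece h0 ht ht.1 hM, hpiece ht hT ht.2 hm]

section TwoEdges

variable {J₀ J₁ : Set E}

theorem integrableOn_comp_of_edgeCost [MeasurableSpace E] [BorelSpace E]
    (h : IsAdmissible_s19 (J₀ ∪ J₁) T x y α) (hJ₁ : MeasurableSet J₁) (h0 : (0 : E) ∈ J₀)
    (hL₀ : ∀ p ∈ J₀, L p = -1) (hL₁ : ∀ p ∈ J₁ \ {0}, L p = 1) :
    IntegrableOn (fun τ => L (y τ)) (Icc 0 T) :=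
  h.continuousOn_s19.integrableOn_comp_of_eqOn (M := 1)
    (g := fun p => (J₁ \ {0}).indicator (fun _ => 2) p - 1)
    ((measurable_const.indicator (hJ₁.diff (measurableSet_singleton 0))).sub measurable_const)
    (fun p => by by_cases hp : p ∈ J₁ \ {0} <;> norm_num [hp])
    fun τ hτ => eq_indicator_sub_one_of_edgeCost h0 hL₀ hL₁ (h.2 τ hτ).2

theorem mapsTo_of_ne_zero (h : IsAdmissible_s19 (J₀ ∪ J₁) T x y α) (hJ₀ : IsClosed J₀)
    (hJ₁ : IsClosed J₁) (hJ₀₁ : J₀ ∩ J₁ ⊆ {0}) (hx : x ∈ J₁) (ht : t ∈ Icc 0 T)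
    (hne : ∀ τ ∈ Icc 0 t, y τ ≠ 0) : MapsTo y (Icc 0 t) J₁ := by
  have hsub : Icc 0 t ⊆ Icc 0 T := Icc_subset_Icc_right ht.2
  refine mapsTo_iff_image_subset.2 <|
    (isPreconnected_Icc.image y (h.continuousOn_s19.mono hsub)).subset_right_of_isClosed hJ₀ hJ₁
      (image_subset_iff.2 fun τ hτ => (h.2 τ (hsub hτ)).2)
      ⟨y 0, mem_image_of_mem y ⟨le_rfl, ht.1⟩, (h.apply_zero (ht.1.trans ht.2)).symm ▸ hx⟩ ?_
  rw [disjoint_left]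
  rintro _ ⟨τ, hτ, rfl⟩ hτ₀₁
  exact hne τ hτ (hJ₀₁ hτ₀₁)

end TwoEdges

end IsAdmissible_s19

theorem IsOptimal.eq_of_isMinOn (hopt : IsOptimal G L T x y α)
    (hLy : IntegrableOn (fun τ => L (y τ)) (Icc 0 T)) (ht : t ∈ Icc 0 T)
    (hmin : IsMinOn L G (y t)) {s : ℝ} (hs : s ∈ Icc t T) : y s = y t := by
  obtain ⟨hadm, hle⟩ := hopt
  have hF := hadm.integrableOn_lagrangian hLy
  have h0 : (0 : ℝ) ∈ Icc 0 T := ⟨le_rfl, ht.1.trans ht.2⟩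
  have hT : T ∈ Icc 0 T := ⟨h0.2, le_rfl⟩
  have hsq : IntervalIntegrable (fun τ => ‖α τ‖ ^ 2) volume t T :=
    (hadm.integrableOn_norm_sq.mono_set (uIcc_subset_Icc ht hT)).intervalIntegrable
  have htail : ∫ τ in t..T, lagrangian L y α τ ≤ (T - t) * L (y t) := by
    have := hle _ _ (hadm.stopAt ht)
    rwa [hadm.cost_stopAt hLy ht, cost, ← intervalIntegral.integral_add_adjacent_intervals
      (hF.mono_set (uIcc_subset_Icc h0 ht)).intervalIntegrable
      (hF.mono_set (uIcc_subset_Icc ht hT)).intervalIntegrable, add_le_add_iff_left] at this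
  have hkin : (T - t) * L (y t) + ∫ τ in t..T, ‖α τ‖ ^ 2 / 2 ≤
      ∫ τ in t..T, lagrangian L y α τ := by
    have := intervalIntegral.integral_mono_on ht.2
      (intervalIntegrable_const.add (hsq.div_const 2))
      (hF.mono_set (uIcc_subset_Icc ht hT)).intervalIntegrable
      fun τ hτ => add_le_add_left (hmin (hadm.2 τ ⟨ht.1.trans hτ.1, hτ.2⟩).2) _
    rwa [intervalIntegral.integral_add intervalIntegrable_const (hsq.div_const 2),
      intervalIntegral.integral_const, smul_eq_mul] at this
  have hzero : ∫ τ in t..s, α τ = 0 :=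
    intervalIntegral.integral_eq_zero_of_integral_norm_sq_nonpos ht.2 hsq
      (by rw [intervalIntegral.integral_div] at hkin; linarith) hs
  rw [hadm.apply_eq_add_integral ht ⟨ht.1.trans hs.1, hs.2⟩, hzero, add_zero]

theorem isAdmissible_straightLine [CompleteSpace E] {c : ℝ} (hc : 0 < c)
    (hG : ∀ θ ∈ Icc (0 : ℝ) 1, θ • x ∈ G) :
    IsAdmissible_s19 G T x (fun s => (1 - min s c / c) • x)
      ((Iic c).indicator fun _ => -c⁻¹ • x) := by
  refine ⟨(memLp_const _).indicator measurableSet_Iic, fun s hs => ⟨?_, hG _ ⟨?_, ?_⟩⟩⟩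
  · dsimp only
    rw [intervalIntegral.integral_indicator_Iic hs.1 hc.le, intervalIntegral.integral_const,
      sub_zero, div_eq_mul_inv]
    module
  · linarith [(div_le_one hc).2 (min_le_right s c)]
  · linarith [div_nonneg (le_min hs.1 hc.le) hc.le]

theorem cost_straightLine {c ℓ : ℝ} (hc : 0 < c) (hcT : c ≤ T)
    (hL : ∀ θ ∈ Ioo (0 : ℝ) 1, L (θ • x) = ℓ) :
    cost L T (fun s => (1 - min s c / c) • x) ((Iic c).indicator fun _ => -c⁻¹ • x) =
      c * (ℓ + ‖c⁻¹ • x‖ ^ 2 / 2) + (T - c) * L 0 := by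
  have hline : EqOn (lagrangian L (fun s => (1 - min s c / c) • x)
      ((Iic c).indicator fun _ => -c⁻¹ • x)) (fun _ => ℓ + ‖c⁻¹ • x‖ ^ 2 / 2) (Ioo 0 c) := by
    intro τ hτ
    have hθ : 1 - τ / c ∈ Ioo (0 : ℝ) 1 :=
      ⟨by linarith [(div_lt_one hc).2 hτ.2], by linarith [div_pos hτ.1 hc]⟩
    simp [lagrangian, min_eq_left hτ.2.le, indicator_of_mem (show τ ∈ Iic c from hτ.2.le),
      hL _ hθ]
  rw [cost_eq_of_const_on_Ioo (p := 0) hcT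
      (intervalIntegrable_const.congr_uIoo (uIoo_of_le hc.le ▸ hline.symm))
      (fun τ hτ => by simp [min_eq_right hτ.1.le, hc.ne'])
      (fun τ hτ => indicator_of_notMem (show τ ∉ Iic c from not_le.2 hτ.1) _),
    intervalIntegral.integral_congr_Ioo_of_le hc.le hline, intervalIntegral.integral_const,
    smul_eq_mul, sub_zero]

end ControlProblem

theorem stmt_19_general {d : ℕ} (T : ℝ)
    (e : Fin 2 → EuclideanSpace ℝ (Fin d))
    (he : ∀ i, ‖e i‖ = 1)
    (J : Fin 2 → Set (EuclideanSpace ℝ (Fin d)))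
    (hJ : ∀ i, J i = {p | ∃ r : ℝ, 0 ≤ r ∧ p = r • e i})
    (G : Set (EuclideanSpace ℝ (Fin d)))
    (hG : G = ⋃ i, J i)
    -- running cost: `−1` on the first edge (and at the vertex), `+1` on the second
    (L : EuclideanSpace ℝ (Fin d) → ℝ)
    (hL1 : ∀ x ∈ J 0, L x = -1)
    (hL2 : ∀ x ∈ J 1 \ {0}, L x = 1)
    -- initial point on the second edge
    (xb : ℝ) (hxb0 : 0 < xb) (hxbT : xb ≤ 4 * T / 5)
    -- admissible trajectories from `x` and the cost
    (Γ : EuclideanSpace ℝ (Fin d) →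
      Set ((ℝ → EuclideanSpace ℝ (Fin d)) × (ℝ → EuclideanSpace ℝ (Fin d))))
    (hΓ : ∀ x, Γ x = {p | MemLp p.2 2 (volume.restrict (Icc (0 : ℝ) T)) ∧
        ∀ s ∈ Icc (0 : ℝ) T, (p.1 s = x + ∫ τ in (0 : ℝ)..s, p.2 τ) ∧ p.1 s ∈ G})
    (Jc : ((ℝ → EuclideanSpace ℝ (Fin d)) × (ℝ → EuclideanSpace ℝ (Fin d))) → ℝ)
    (hJc : ∀ p, Jc p = ∫ τ in (0 : ℝ)..T, (L (p.1 τ) + ‖p.2 τ‖ ^ 2 / 2))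
    -- an optimal trajectory starting from `x̄ e₂`
    (y α : ℝ → EuclideanSpace ℝ (Fin d))
    (hopt : (y, α) ∈ Γ (xb • e 1) ∧ ∀ p ∈ Γ (xb • e 1), Jc (y, α) ≤ Jc p) :
    (∀ t ∈ Icc (0 : ℝ) T, y t = 0 → ∀ s ∈ Icc t T, y s = 0) ∧
    ∃ t ∈ Icc (0 : ℝ) (5 * xb / 4), y t = 0 := by
  obtain rfl : Γ = fun x => {p | IsAdmissible_s19 G T x p.1 p.2} := funext hΓ
  obtain rfl : Jc = fun p => cost L T p.1 p.2 := funext hJc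
  rw [iUnion_fin_two] at hG
  subst hG
  replace hopt : IsOptimal (J 0 ∪ J 1) L T (xb • e 1) y α :=
    ⟨hopt.1, fun y' α' h => hopt.2 (y', α') h⟩
  have hT : 0 ≤ T := by linarith
  have hclosed : ∀ i, IsClosed (J i) := fun i => (hJ i).symm ▸ isClosed_ray (e i)
  have hray : ∀ r : ℝ, 0 ≤ r → r • e 1 ∈ J 1 := fun r hr => (hJ 1).symm ▸ ⟨r, hr, rfl⟩
  have h0 : (0 : EuclideanSpace ℝ (Fin d)) ∈ J 0 :=
    (hJ 0).symm ▸ ⟨0, le_rfl, (zero_smul ℝ _).symm⟩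
  have hLy := hopt.1.integrableOn_comp_of_edgeCost (hclosed 1).measurableSet h0 hL1 hL2
  have hmin := isMinOn_zero_of_edgeCost h0 hL1 hL2
  refine ⟨fun t ht hyt s hs => hyt ▸ hopt.eq_of_isMinOn hLy ht (hyt ▸ hmin) hs, ?_⟩
  by_contra! hne
  have ht₁ : 5 * xb / 4 ∈ Icc 0 T := ⟨by positivity, by linarith⟩
  have hedge := hopt.1.mapsTo_of_ne_zero (hclosed 0) (hclosed 1)
    (inter_subset_zero_of_edgeCost hL1 hL2) (hray xb hxb0.le) ht₁ hne
  have hlow := hopt.1.le_cost hLy ht₁ (M := 1) (m := -1)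
    (fun τ hτ => (hL2 _ ⟨hedge hτ, hne τ hτ⟩).ge)
    (fun τ hτ => hL1 0 h0 ▸ hmin (hopt.1.2 τ ⟨ht₁.1.trans hτ.1, hτ.2⟩).2)
  have hseg : ∀ θ : ℝ, 0 ≤ θ → θ • xb • e 1 ∈ J 1 := fun θ hθ =>
    smul_smul θ xb (e 1) ▸ hray _ (by positivity)
  have he1 : e 1 ≠ 0 := norm_ne_zero_iff.1 (by rw [he]; exact one_ne_zero)
  have hup := hopt.2 _ _ (isAdmissible_straightLine (T := T) (by positivity : (0 : ℝ) < xb / 2)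
    fun θ hθ => Or.inr (hseg θ hθ.1))
  have hspeed : ‖(xb / 2)⁻¹ • xb • e 1‖ = 2 := by
    rw [smul_smul, norm_smul, he, mul_one, Real.norm_eq_abs, abs_of_pos (by positivity)]
    field_simp
  rw [cost_straightLine (ℓ := 1) (by positivity) (by linarith)
    (fun θ hθ => hL2 _ ⟨hseg θ hθ.1.le, smul_ne_zero hθ.1.ne' (smul_ne_zero hxb0.ne' he1)⟩),
    hspeed, hL1 0 h0] at hup
  linarith

/-- In the two-edge example with `ℓ₁ ≡ −1`, `ℓ₂ ≡ 1`, vertex cost `−1` and zero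
terminal costs, an optimal trajectory starting from `x̄ e₂` (with `0 < x̄ ≤ 1/2`,
`x̄ ≤ 4T/5`) (a) never leaves the vertex once it reaches it, and (b) reaches the
vertex before time `5x̄/4`. -/
theorem stmt_19 {d : ℕ} (T : ℝ) (hT : 0 < T)
    (e : Fin 2 → EuclideanSpace ℝ (Fin d))
    (he : ∀ i, ‖e i‖ = 1) (hinj : Function.Injective e)
    (J : Fin 2 → Set (EuclideanSpace ℝ (Fin d)))
    (hJ : ∀ i, J i = {p | ∃ r : ℝ, 0 ≤ r ∧ p = r • e i})
    (G : Set (EuclideanSpace ℝ (Fin d)))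
    (hG : G = ⋃ i, J i)
    -- running cost: `−1` on the first edge (and at the vertex), `+1` on the second
    (L : EuclideanSpace ℝ (Fin d) → ℝ)
    (hL1 : ∀ x ∈ J 0, L x = -1)
    (hL2 : ∀ x ∈ J 1 \ {0}, L x = 1)
    -- initial point on the second edge
    (xb : ℝ) (hxb0 : 0 < xb) (hxb1 : xb ≤ 1 / 2) (hxbT : xb ≤ 4 * T / 5)
    -- admissible trajectories from `x` and the cost
    (Γ : EuclideanSpace ℝ (Fin d) →
      Set ((ℝ → EuclideanSpace ℝ (Fin d)) × (ℝ → EuclideanSpace ℝ (Fin d))))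
    (hΓ : ∀ x, Γ x = {p | MemLp p.2 2 (volume.restrict (Icc (0 : ℝ) T)) ∧
        ∀ s ∈ Icc (0 : ℝ) T, (p.1 s = x + ∫ τ in (0 : ℝ)..s, p.2 τ) ∧ p.1 s ∈ G})
    (Jc : ((ℝ → EuclideanSpace ℝ (Fin d)) × (ℝ → EuclideanSpace ℝ (Fin d))) → ℝ)
    (hJc : ∀ p, Jc p = ∫ τ in (0 : ℝ)..T, (L (p.1 τ) + ‖p.2 τ‖ ^ 2 / 2))
    -- an optimal trajectory starting from `x̄ e₂`
    (y α : ℝ → EuclideanSpace ℝ (Fin d))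
    (hopt : (y, α) ∈ Γ (xb • e 1) ∧ ∀ p ∈ Γ (xb • e 1), Jc (y, α) ≤ Jc p) :
    (∀ t ∈ Icc (0 : ℝ) T, y t = 0 → ∀ s ∈ Icc t T, y s = 0) ∧
    ∃ t ∈ Icc (0 : ℝ) (5 * xb / 4), y t = 0 :=
  stmt_19_general T e he J hJ G hG L hL1 hL2 xb hxb0 hxbT Γ hΓ Jc hJc y α hopt
end
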